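/- arXiv:1604.02865 — 12 statements merged into one kernel-verified Lean document; each statement's English description precedes it below -/
import Mathlib

section
/- Let R be a finite CC-ring. If x is a non-central element of R and y ∈ C_R(x) is also non-central, then C_R(x) = C_R(y). -/
open Polynomial

/-- The center of a (possibly non-unital) ring, as a set. -/
def ringCenter (R : Type*) [NonUnitalRing R] : Set R :=
  {z : R | ∀ r : R, r * z = z * r}

/-- The centralizer of an element of a (possibly non-unital) ring, as a set. -/
def ringCentralizer {R : Type*} [NonUnitalRing R] (r : R) : Set R :=
  {s : R | r * s = s * r}

/-- The commuting graph of a ring: vertices are the non-central elements, and two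
distinct vertices are adjacent iff they commute. -/
def commGraph (R : Type*) [NonUnitalRing R] :
    SimpleGraph {x : R // x ∉ ringCenter R} where
  Adj x y := x ≠ y ∧ (x : R) * (y : R) = (y : R) * (x : R)
  symm := ⟨fun _ _ h => ⟨h.1.symm, h.2.symm⟩⟩
  loopless := ⟨fun _ h => h.1 rfl⟩

/-- The characteristic polynomial (over `K`) of the adjacency matrix of the
commuting graph of a finite ring. -/
noncomputable def commCharpoly (R : Type*) [NonUnitalRing R] [Fintype R]
    (K : Type*) [CommRing K] : Polynomial K := by
  classical
  exact ((commGraph R).adjMatrix K).charpoly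

/-- The center of a (possibly non-unital) ring, as an additive subgroup. -/
def centerAddSubgroup (R : Type*) [NonUnitalRing R] : AddSubgroup R where
  carrier := ringCenter R
  add_mem' := by
    intro a b ha hb r
    rw [mul_add, add_mul, ha r, hb r]
  zero_mem' := by
    intro r
    simp
  neg_mem' := by
    intro a ha r
    rw [mul_neg, neg_mul, ha r]

/-- In a finite CC-ring, if `x` is non-central and `y ∈ C_R(x)` is
non-central, then `C_R(x) = C_R(y)`. -/
theorem stmt0 (R : Type*) [NonUnitalRing R] [Fintype R]
    (hnc : ∃ a b : R, a * b ≠ b * a)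
    (hCC : ∀ x : R, x ∉ ringCenter R →
      ∀ a ∈ ringCentralizer x, ∀ b ∈ ringCentralizer x, a * b = b * a)
    (x y : R) (hx : x ∉ ringCenter R) (hy : y ∈ ringCentralizer x)
    (hyc : y ∉ ringCenter R) :
    ringCentralizer x = ringCentralizer y := by
  ext a
  constructor
  · intro ha
    have hyC : y ∈ ringCentralizer x := hy
    exact hCC x hx y hyC a ha
  · intro ha
    have hxC : x ∈ ringCentralizer y := hy.symm
    exact (hCC y hyc a ha x hxC).symm
end

section
/- Let R be a finite CC-ring and let x, y be non-central elements of R with C_R(x) ≠ C_R(y). Then C_R(x) ∩ C_R(y) = Z(R). -/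
open Polynomial

/-- In a finite CC-ring, distinct centralizers of non-central
elements intersect in the center. -/
theorem stmt1 (R : Type*) [NonUnitalRing R] [Fintype R]
    (hnc : ∃ a b : R, a * b ≠ b * a)
    (hCC : ∀ x : R, x ∉ ringCenter R →
      ∀ a ∈ ringCentralizer x, ∀ b ∈ ringCentralizer x, a * b = b * a)
    (x y : R) (hx : x ∉ ringCenter R) (hy : y ∉ ringCenter R)
    (hne : ringCentralizer x ≠ ringCentralizer y) :
    ringCentralizer x ∩ ringCentralizer y = ringCenter R := by
  have key : ∀ u : R, u ∉ ringCenter R → ∀ a : R, a ∉ ringCenter R →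
      a ∈ ringCentralizer u → ringCentralizer u = ringCentralizer a := by
    intro u hu a ha hau
    ext b
    constructor
    · intro hb
      exact hCC u hu a hau b hb
    · intro hb
      have hua : u ∈ ringCentralizer a := hau.symm
      exact (hCC a ha b hb u hua).symm
  ext a
  constructor
  · rintro ⟨hax, hay⟩
    by_contra ha
    have h1 := key x hx a ha hax
    have h2 := key y hy a ha hay
    exact hne (h1.trans h2.symm)
  · intro ha
    exact ⟨ha x, ha y⟩
end

section
/- Let R be a finite CC-ring and let S_1, S_2, …, S_n be the distinct centralizers of non-central elements of R (i.e., an enumeration without repetition of the set {C_R(x) : x ∈ R \ Z(R)}). Then the characteristic polynomial of the adjacency matrix of the commuting graph Γ_R equals (X + 1)^{(Σ_{i=1}^n |S_i|) − n(|Z(R)| + 1)} · ∏_{i=1}^n (X − (|S_i| − |Z(R)| − 1)). -/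
set_option maxHeartbeats 1000000
set_option synthInstance.maxHeartbeats 400000

open Polynomial
open Matrix

noncomputable def auxPhi : ℤ[X] →+* RatFunc ℚ :=
  (algebraMap ℚ[X] (RatFunc ℚ)).comp (Polynomial.mapRingHom (Int.castRingHom ℚ))

lemma auxPhi_inj : Function.Injective auxPhi :=
  (RatFunc.algebraMap_injective ℚ).comp
    (Polynomial.map_injective _ Int.cast_injective)

lemma det_aux {V : Type*} [Fintype V] [DecidableEq V] {n : ℕ} (f : V → Fin n)
    (hsurj : Function.Surjective f) :
    Matrix.det ((X + 1 : ℤ[X]) • (1 : Matrix V V ℤ[X])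
        - Matrix.of (fun x y => if f x = f y then 1 else 0)) =
    (X + 1) ^ (Fintype.card V - n) *
      ∏ i : Fin n, (X - C ((Fintype.card {v : V // f v = i} : ℤ) - 1)) := by
  classical
  apply auxPhi_inj
  rw [RingHom.map_det auxPhi, RingHom.mapMatrix_apply]
  set t : RatFunc ℚ := auxPhi (X + 1) with ht
  have ht0 : t ≠ 0 := by
    rw [ht]
    intro h
    have : (X + 1 : ℤ[X]) = 0 := auxPhi_inj (by simpa using h)
    have h1 := congrArg (fun p => Polynomial.coeff p 1) this
    simp [Polynomial.coeff_one] at h1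
  set N : Matrix (Fin n) V (RatFunc ℚ) := Matrix.of (fun i x => if f x = i then 1 else 0) with hN
  have hmap : (((X + 1 : ℤ[X]) • (1 : Matrix V V ℤ[X])
        - Matrix.of (fun x y => if f x = f y then 1 else 0)).map auxPhi)
      = t • (1 : Matrix V V (RatFunc ℚ)) - Nᵀ * N := by
    ext x y
    simp only [Matrix.map_apply, Matrix.sub_apply, Matrix.smul_apply, Matrix.one_apply,
      Matrix.of_apply, Matrix.mul_apply, Matrix.transpose_apply, hN]
    rw [map_sub]
    congr 1
    · split <;> simp [ht]
    · rcases eq_or_ne (f x) (f y) with h | h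
      · rw [if_pos h, h]
        simp [Finset.sum_ite_eq, ite_mul]
      · rw [if_neg h]
        rw [map_zero]
        symm
        apply Finset.sum_eq_zero
        intro i _
        split_ifs with h1 h2 <;> simp_all
  rw [hmap]
  have key : t • (1 : Matrix V V (RatFunc ℚ)) - Nᵀ * N
      = t • ((1 : Matrix V V (RatFunc ℚ)) - Nᵀ * (t⁻¹ • N)) := by
    rw [smul_sub, Matrix.mul_smul, smul_smul, mul_inv_cancel₀ ht0, one_smul]
  rw [key, Matrix.det_smul, Matrix.det_one_sub_mul_comm]
  have hdiag : (t⁻¹ • N) * Nᵀ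
      = Matrix.diagonal (fun i => t⁻¹ * (Fintype.card {v : V // f v = i} : RatFunc ℚ)) := by
    ext i j
    rw [Matrix.mul_apply]
    simp only [Matrix.smul_apply, Matrix.transpose_apply, Matrix.of_apply, hN, smul_eq_mul]
    by_cases h : i = j
    · subst h
      rw [Matrix.diagonal_apply_eq]
      have hx : ∀ x : V, (t⁻¹ * if f x = i then (1 : RatFunc ℚ) else 0) *
          (if f x = i then 1 else 0) = if f x = i then t⁻¹ else 0 := by
        intro x; split <;> simp
      rw [Finset.sum_congr rfl (fun x _ => hx x), ← Finset.sum_filter,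
        Finset.sum_const, Fintype.card_subtype, nsmul_eq_mul, mul_comm]
    · rw [Matrix.diagonal_apply_ne _ h]
      apply Finset.sum_eq_zero
      intro x _
      rcases eq_or_ne (f x) i with h1 | h1
      · rw [if_neg (fun h2 : f x = j => h (h1.symm.trans h2))]
        simp
      · rw [if_neg h1]
        simp
  rw [hdiag]
  have : (1 : Matrix (Fin n) (Fin n) (RatFunc ℚ))
      - Matrix.diagonal (fun i => t⁻¹ * (Fintype.card {v : V // f v = i} : RatFunc ℚ))
      = Matrix.diagonal (fun i => 1 - t⁻¹ * (Fintype.card {v : V // f v = i} : RatFunc ℚ)) := by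
    rw [← Matrix.diagonal_one, Matrix.diagonal_sub]
  rw [this, Matrix.det_diagonal]
  have hcard : Fintype.card V = ∑ i : Fin n, Fintype.card {v : V // f v = i} := by
    rw [← Fintype.card_sigma]
    exact Fintype.card_congr (Equiv.sigmaFiberEquiv f).symm
  have hge : ∀ i, 1 ≤ Fintype.card {v : V // f v = i} := by
    intro i
    obtain ⟨v, hv⟩ := hsurj i
    exact Fintype.card_pos_iff.mpr ⟨⟨v, hv⟩⟩
  rw [_root_.map_mul, _root_.map_pow, map_prod]
  have hC : ∀ a : ℤ, auxPhi (C a) = (a : RatFunc ℚ) := fun a => by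
    rw [show (C a : ℤ[X]) = (a : ℤ[X]) by simp, map_intCast]
  have hterm : ∀ i : Fin n, auxPhi (X - C ((Fintype.card {v : V // f v = i} : ℤ) - 1))
      = t - (Fintype.card {v : V // f v = i} : RatFunc ℚ) := by
    intro i
    rw [map_sub, hC, ht, _root_.map_add, _root_.map_one]
    push_cast
    ring
  simp_rw [hterm]
  have expand : ∀ i, 1 - t⁻¹ * (Fintype.card {v : V // f v = i} : RatFunc ℚ)
      = t⁻¹ * (t - (Fintype.card {v : V // f v = i} : RatFunc ℚ)) := by
    intro i
    field_simp
  simp_rw [expand]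
  rw [Finset.prod_mul_distrib, Finset.prod_const, Finset.card_univ, Fintype.card_fin]
  rw [← mul_assoc]
  congr 1
  have hn : n ≤ Fintype.card V := by
    rw [hcard]
    calc n = ∑ _i : Fin n, 1 := by simp
    _ ≤ _ := Finset.sum_le_sum (fun i _ => hge i)
  rw [← ht, pow_sub₀ t ht0 hn, inv_pow]

/-- spectrum (via the characteristic polynomial) of the commuting
graph of a finite CC-ring with distinct centralizers `S 0, …, S (n-1)` of
non-central elements. -/
theorem stmt3 (R : Type*) [NonUnitalRing R] [Fintype R]
    (hnc : ∃ a b : R, a * b ≠ b * a)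
    (hCC : ∀ x : R, x ∉ ringCenter R →
      ∀ a ∈ ringCentralizer x, ∀ b ∈ ringCentralizer x, a * b = b * a)
    (n : ℕ) (S : Fin n → Set R) (hinj : Function.Injective S)
    (hrange : Set.range S =
      {T : Set R | ∃ x : R, x ∉ ringCenter R ∧ T = ringCentralizer x}) :
    commCharpoly R ℤ =
      (X + 1) ^ ((∑ i, (S i).ncard) - n * ((ringCenter R).ncard + 1)) *
        ∏ i, (X - C (((S i).ncard : ℤ) - ((ringCenter R).ncard : ℤ) - 1)) := by
  classical
  have hkey : ∀ x y : R, x ∉ ringCenter R → y ∉ ringCenter R → x * y = y * x →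
      ringCentralizer x = ringCentralizer y := by
    intro x y hx hy hxy
    have step : ∀ u v : R, u ∉ ringCenter R → (u * v = v * u) →
        ringCentralizer u ⊆ ringCentralizer v := by
      intro u v hu huv a ha
      exact hCC u hu v huv a ha
    exact Set.Subset.antisymm (step x y hx hxy) (step y x hy hxy.symm)
  have hex : ∀ x : {x : R // x ∉ ringCenter R}, ∃ i : Fin n,
      S i = ringCentralizer (x : R) := by
    intro x
    have : ringCentralizer (x : R) ∈ Set.range S := by
      rw [hrange]; exact ⟨x, x.2, rfl⟩
    obtain ⟨i, hi⟩ := this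
    exact ⟨i, hi⟩
  choose idx hidx using hex
  have hself : ∀ x : R, x ∈ ringCentralizer x := fun x => rfl
  have hZsub : ∀ x : R, ringCenter R ⊆ ringCentralizer x := by
    intro x z hz
    exact (hz x)
  obtain ⟨w, hw⟩ : ∃ w : Fin n → R, ∀ i, w i ∉ ringCenter R ∧ S i = ringCentralizer (w i) := by
    have : ∀ i : Fin n, ∃ x : R, x ∉ ringCenter R ∧ S i = ringCentralizer x := by
      intro i
      have h1 : S i ∈ Set.range S := ⟨i, rfl⟩
      rw [hrange] at h1
      exact h1
    exact ⟨fun i => (this i).choose, fun i => (this i).choose_spec⟩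
  have hmem : ∀ (v : {x : R // x ∉ ringCenter R}) (i : Fin n),
      idx v = i ↔ (v : R) ∈ S i := by
    intro v i
    constructor
    · intro h
      rw [← h, hidx v]
      exact hself _
    · intro h
      apply hinj
      rw [hidx v, (hw i).2]
      have h' : (v : R) ∈ ringCentralizer (w i) := by rwa [(hw i).2] at h
      exact (hkey (w i) (v : R) (hw i).1 v.2 h').symm
  have hsurj : Function.Surjective idx := by
    intro i
    exact ⟨⟨w i, (hw i).1⟩, (hmem _ i).mpr (by show w i ∈ S i; rw [(hw i).2]; exact hself _)⟩
  have hadj : ∀ v u : {x : R // x ∉ ringCenter R},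
      (commGraph R).Adj v u ↔ v ≠ u ∧ idx v = idx u := by
    intro v u
    constructor
    · rintro ⟨hne, hc⟩
      refine ⟨hne, hinj ?_⟩
      rw [hidx v, hidx u]
      exact hkey _ _ v.2 u.2 hc
    · rintro ⟨hne, hidxeq⟩
      refine ⟨hne, ?_⟩
      have h1 : (u : R) ∈ S (idx v) := (hmem u (idx v)).mp hidxeq.symm
      rw [hidx v] at h1
      exact h1
  have hZle : ∀ i, ringCenter R ⊆ S i := by
    intro i
    rw [(hw i).2]; exact hZsub _
  have hfib : ∀ i, Fintype.card {v : {x : R // x ∉ ringCenter R} // idx v = i}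
      = (S i).ncard - (ringCenter R).ncard := by
    intro i
    have e : {v : {x : R // x ∉ ringCenter R} // idx v = i} ≃ ↥(S i \ ringCenter R) :=
      { toFun := fun v => ⟨v.1.1, (hmem v.1 i).mp v.2, v.1.2⟩
        invFun := fun y => ⟨⟨y.1, y.2.2⟩, (hmem ⟨y.1, y.2.2⟩ i).mpr y.2.1⟩
        left_inv := fun v => Subtype.ext (Subtype.ext rfl)
        right_inv := fun y => rfl }
    rw [Fintype.card_congr e, ← Set.toFinset_card, ← Set.ncard_eq_toFinset_card',
      Set.ncard_diff (hZle i)]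
  have hle : ∀ i, (ringCenter R).ncard + 1 ≤ (S i).ncard := by
    intro i
    have h1 : (ringCenter R).ncard ≤ (S i).ncard :=
      Set.ncard_le_ncard (hZle i) (S i).toFinite
    have h2 : 0 < (S i \ ringCenter R).ncard := by
      rw [Set.ncard_pos (Set.toFinite _)]
      exact ⟨w i, (by rw [(hw i).2]; exact hself _), (hw i).1⟩
    rw [Set.ncard_diff (hZle i)] at h2
    omega
  have hcp : commCharpoly R ℤ = Matrix.det ((X + 1 : ℤ[X]) • (1 : Matrix _ _ ℤ[X])
      - Matrix.of (fun x y => if idx x = idx y then 1 else 0)) := by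
    have h1 : commCharpoly R ℤ = ((commGraph R).adjMatrix ℤ).charpoly := rfl
    rw [h1, Matrix.charpoly]
    congr 1
    apply Matrix.ext
    intro v u
    by_cases h : v = u
    · subst h
      rw [Matrix.charmatrix_apply_eq]
      have hA : (commGraph R).adjMatrix ℤ v v = 0 := by
        rw [SimpleGraph.adjMatrix_apply, if_neg ((commGraph R).loopless.irrefl v)]
      rw [hA, Polynomial.C_0, sub_zero, Matrix.sub_apply, Matrix.smul_apply,
        Matrix.one_apply_eq, Matrix.of_apply, if_pos rfl, smul_eq_mul, mul_one]
      ring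
    · rw [Matrix.charmatrix_apply_ne _ _ _ h]
      simp only [Matrix.sub_apply, Matrix.smul_apply, Matrix.one_apply_ne h,
        Matrix.of_apply, SimpleGraph.adjMatrix_apply, smul_eq_mul, mul_zero, zero_sub]
      by_cases h2 : idx v = idx u
      · rw [if_pos h2, if_pos ((hadj v u).mpr ⟨h, h2⟩), Polynomial.C_1]
      · rw [if_neg h2, if_neg (fun ha => h2 ((hadj v u).mp ha).2), Polynomial.C_0, neg_zero]
  rw [hcp, det_aux idx hsurj]
  simp_rw [hfib]
  have hcardV : Fintype.card {x : R // x ∉ ringCenter R}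
      = ∑ i, ((S i).ncard - (ringCenter R).ncard) := by
    calc Fintype.card {x : R // x ∉ ringCenter R}
        = ∑ i : Fin n, Fintype.card {v : {x : R // x ∉ ringCenter R} // idx v = i} := by
          rw [← Fintype.card_sigma]
          exact Fintype.card_congr (Equiv.sigmaFiberEquiv idx).symm
      _ = _ := Finset.sum_congr rfl (fun i _ => hfib i)
  have hsum : (∑ i, ((S i).ncard - (ringCenter R).ncard)) + n * (ringCenter R).ncard
      = ∑ i, (S i).ncard := by
    calc (∑ i, ((S i).ncard - (ringCenter R).ncard)) + n * (ringCenter R).ncard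
        = ∑ i, (((S i).ncard - (ringCenter R).ncard) + (ringCenter R).ncard) := by
          rw [Finset.sum_add_distrib, Finset.sum_const, Finset.card_univ,
            Fintype.card_fin, smul_eq_mul]
      _ = ∑ i, (S i).ncard :=
          Finset.sum_congr rfl (fun i _ => Nat.sub_add_cancel (by have := hle i; omega))
  have hnle : n ≤ ∑ i, ((S i).ncard - (ringCenter R).ncard) := by
    calc n = ∑ _i : Fin n, 1 := by simp
      _ ≤ _ := Finset.sum_le_sum (fun i _ => by have := hle i; omega)
  congr 1
  · congr 1
    have hd : n * ((ringCenter R).ncard + 1) = n * (ringCenter R).ncard + n :=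
      Nat.mul_succ n _
    omega
  · apply Finset.prod_congr rfl
    intro i _
    have := hle i
    congr 2
    omega
end

section
/- Let R be a finite CC-ring. Then the commuting graph Γ_R is integral, i.e., every eigenvalue of the (real) adjacency matrix of Γ_R is an integer. -/
open Polynomial

open Matrix in
lemma eval_charpoly' {n : Type*} [Fintype n] [DecidableEq n] {K : Type*} [CommRing K]
    (M : Matrix n n K) (μ : K) :
    (M.charpoly).eval μ = (μ • (1 : Matrix n n K) - M).det := by
  rw [Matrix.charpoly, ← Polynomial.coe_evalRingHom, RingHom.map_det]
  congr 1
  ext i j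
  by_cases h : i = j
  · subst h
    simp [charmatrix_apply_eq, Matrix.one_apply]
  · simp [charmatrix_apply_ne _ _ _ h, Matrix.one_apply_ne h]

/-- the commuting graph of a finite CC-ring is integral. -/
theorem stmt4 (R : Type*) [NonUnitalRing R] [Fintype R]
    (hnc : ∃ a b : R, a * b ≠ b * a)
    (hCC : ∀ x : R, x ∉ ringCenter R →
      ∀ a ∈ ringCentralizer x, ∀ b ∈ ringCentralizer x, a * b = b * a) :
    ∀ μ : ℝ, (commCharpoly R ℝ).IsRoot μ → ∃ k : ℤ, μ = (k : ℝ) := by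
  classical
  intro μ hμ
  set V := {x : R // x ∉ ringCenter R} with hV
  set A : Matrix V V ℝ := (commGraph R).adjMatrix ℝ with hA
  -- get an eigenvector
  have hdet : (μ • (1 : Matrix V V ℝ) - A).det = 0 := by
    have h := eval_charpoly' A μ
    have : (A.charpoly).eval μ = 0 := hμ
    rw [this] at h
    exact h.symm
  obtain ⟨v, hv0, hv⟩ := (Matrix.exists_mulVec_eq_zero_iff).mpr hdet
  have hAv : A.mulVec v = μ • v := by
    have h := hv
    rw [Matrix.sub_mulVec, Matrix.smul_mulVec, Matrix.one_mulVec, sub_eq_zero] at h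
    exact h.symm
  -- the commuting classes
  let Cl : V → Finset V := fun x => Finset.univ.filter (fun y => (x : R) * (y : R) = (y : R) * (x : R))
  have hmemCl : ∀ x y : V, y ∈ Cl x ↔ (x : R) * (y : R) = (y : R) * (x : R) := by
    intro x y; simp [Cl]
  have hself : ∀ x : V, x ∈ Cl x := fun x => (hmemCl x x).mpr rfl
  have hClEq : ∀ x y : V, (x : R) * (y : R) = (y : R) * (x : R) → Cl x = Cl y := by
    intro x y hxy
    ext z
    rw [hmemCl, hmemCl]
    constructor
    · intro hxz
      exact hCC x x.2 (y : R) hxy (z : R) hxz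
    · intro hyz
      exact hCC y y.2 (x : R) hxy.symm (z : R) hyz
  -- the eigen equation on classes
  have hkey : ∀ x : V, ∑ y ∈ Cl x, v y = (μ + 1) * v x := by
    intro x
    have h1 : (A.mulVec v) x = ∑ y ∈ (commGraph R).neighborFinset x, v y :=
      SimpleGraph.adjMatrix_mulVec_apply _ _ _
    have h2 : (commGraph R).neighborFinset x = (Cl x).erase x := by
      ext y
      simp only [SimpleGraph.mem_neighborFinset, Finset.mem_erase, hmemCl]
      simp only [commGraph]
      constructor
      · rintro ⟨hne, hc⟩; exact ⟨hne.symm, hc⟩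
      · rintro ⟨hne, hc⟩; exact ⟨hne.symm, hc⟩
    have h3 : ∑ y ∈ (Cl x).erase x, v y = (∑ y ∈ Cl x, v y) - v x := by
      rw [Finset.sum_erase_eq_sub (hself x)]
    have h4 : (A.mulVec v) x = μ * v x := by rw [hAv]; simp
    rw [h1, h2, h3] at h4
    linarith
  -- pick a nonzero coordinate
  obtain ⟨x, hx⟩ : ∃ x, v x ≠ 0 := by
    by_contra h
    push_neg at h
    exact hv0 (funext h)
  by_cases hS : ∑ y ∈ Cl x, v y = 0
  · refine ⟨-1, ?_⟩
    have := hkey x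
    rw [hS] at this
    have : μ + 1 = 0 := by
      rcases mul_eq_zero.mp this.symm with h | h
      · exact h
      · exact absurd h hx
    push_cast
    linarith
  · refine ⟨(Cl x).card - 1, ?_⟩
    have hsum : ∑ y ∈ Cl x, (∑ z ∈ Cl y, v z) = (Cl x).card * (∑ z ∈ Cl x, v z) := by
      rw [Finset.sum_congr rfl (fun y hy => by
        rw [show Cl y = Cl x from (hClEq x y ((hmemCl x y).mp hy)).symm])]
      rw [Finset.sum_const, nsmul_eq_mul]
    have hsum2 : ∑ y ∈ Cl x, (∑ z ∈ Cl y, v z) = (μ + 1) * ∑ y ∈ Cl x, v y := by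
      rw [Finset.sum_congr rfl (fun y _ => hkey y), ← Finset.mul_sum]
    have : ((Cl x).card : ℝ) = μ + 1 := by
      have := hsum.symm.trans hsum2
      exact mul_right_cancel₀ hS this
    push_cast
    linarith
end

section
/- Let R be a finite CC-ring and A a finite commutative ring. Then the product ring R × A is a CC-ring; moreover Z(R × A) = Z(R) × A, and the distinct centralizers of non-central elements of R × A are exactly the sets S × A where S ranges over the distinct centralizers of non-central elements of R. -/
open Polynomial

/-- if `R` is a finite CC-ring and `A` a finite commutative ring,
then `R × A` is a CC-ring, `Z(R × A) = Z(R) × A`, and the distinct centralizers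
of non-central elements of `R × A` are exactly the sets `S × A` with `S` a
centralizer of a non-central element of `R`. -/
theorem stmt5 (R A : Type*) [NonUnitalRing R] [Fintype R]
    [NonUnitalCommRing A] [Fintype A]
    (hnc : ∃ a b : R, a * b ≠ b * a)
    (hCC : ∀ x : R, x ∉ ringCenter R →
      ∀ a ∈ ringCentralizer x, ∀ b ∈ ringCentralizer x, a * b = b * a) :
    (∃ u v : R × A, u * v ≠ v * u) ∧
    (∀ w : R × A, w ∉ ringCenter (R × A) →
      ∀ a ∈ ringCentralizer w, ∀ b ∈ ringCentralizer w, a * b = b * a) ∧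
    ringCenter (R × A) = (ringCenter R) ×ˢ (Set.univ : Set A) ∧
    {T : Set (R × A) | ∃ w : R × A, w ∉ ringCenter (R × A) ∧ T = ringCentralizer w} =
      (fun S : Set R => S ×ˢ (Set.univ : Set A)) ''
        {S : Set R | ∃ x : R, x ∉ ringCenter R ∧ S = ringCentralizer x} := by
  have hcen : ∀ w : R × A, w ∈ ringCenter (R × A) ↔ w.1 ∈ ringCenter R := by
    intro w
    constructor
    · intro h r
      exact congrArg Prod.fst (h (r, 0))
    · intro h s
      exact Prod.ext (h s.1) (mul_comm s.2 w.2)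
  have hctr : ∀ w : R × A, ringCentralizer w = ringCentralizer w.1 ×ˢ (Set.univ : Set A) := by
    intro w
    ext s
    constructor
    · intro h
      exact ⟨congrArg Prod.fst h, Set.mem_univ _⟩
    · intro h
      exact Prod.ext h.1 (mul_comm w.2 s.2)
  refine ⟨?_, ?_, ?_, ?_⟩
  · obtain ⟨a, b, hab⟩ := hnc
    exact ⟨(a, 0), (b, 0), fun h => hab (congrArg Prod.fst h)⟩
  · intro w hw a ha b hb
    have hw1 : w.1 ∉ ringCenter R := fun h => hw ((hcen w).2 h)
    have ha1 : a.1 ∈ ringCentralizer w.1 := congrArg Prod.fst ha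
    have hb1 : b.1 ∈ ringCentralizer w.1 := congrArg Prod.fst hb
    exact Prod.ext (hCC w.1 hw1 a.1 ha1 b.1 hb1) (mul_comm a.2 b.2)
  · ext w
    simp only [Set.mem_prod, Set.mem_univ, and_true]
    exact hcen w
  · ext T
    constructor
    · rintro ⟨w, hw, rfl⟩
      exact ⟨ringCentralizer w.1, ⟨w.1, fun h => hw ((hcen w).2 h), rfl⟩, (hctr w).symm⟩
    · rintro ⟨S, ⟨x, hx, rfl⟩, rfl⟩
      refine ⟨(x, 0), fun h => hx ((hcen _).1 h), (hctr (x, 0)).symm⟩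
end

section
/- Let R be a finite CC-ring with distinct centralizers S_1, …, S_n of non-central elements of R, and let A be a finite commutative ring. Then the characteristic polynomial of the adjacency matrix of the commuting graph of R × A equals (X + 1)^{(Σ_{i=1}^n |A|(|S_i| − |Z(R)|)) − n} · ∏_{i=1}^n (X − (|A|(|S_i| − |Z(R)|) − 1)). -/
open Polynomial

section AuxStmt6
open Matrix

lemma aux_det_field {F : Type*} [Field F] {σ : Type*} [Fintype σ] [DecidableEq σ]
    (a : F) (ha : a ≠ 0) {k : ℕ} (hk : Fintype.card σ = k + 1) :
    (a • (1 : Matrix σ σ F) - Matrix.of (fun _ _ => (1:F))).det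
      = a ^ k * (a - (Fintype.card σ : F)) := by
  have hM : a • (1 : Matrix σ σ F) - Matrix.of (fun _ _ => (1:F))
      = a • ((1 : Matrix σ σ F) + replicateCol Unit (fun _ => -a⁻¹) * replicateRow Unit (fun _ => (1:F))) := by
    ext i j
    simp only [Matrix.sub_apply, Matrix.smul_apply, Matrix.of_apply, Matrix.add_apply,
      Matrix.mul_apply, Matrix.replicateCol_apply, Matrix.replicateRow_apply, Finset.univ_unique,
      Finset.sum_singleton, smul_eq_mul]
    field_simp
    ring
  rw [hM, Matrix.det_smul, Matrix.det_one_add_replicateCol_mul_replicateRow]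
  have hdot : (fun _ : σ => (1:F)) ⬝ᵥ (fun _ => -a⁻¹) = -(Fintype.card σ * a⁻¹) := by
    simp [dotProduct, Finset.sum_const, hk]
  rw [hdot, hk, pow_succ]
  field_simp
  ring

lemma aux_charpoly (σ : Type*) [Fintype σ] [DecidableEq σ] (h : 1 ≤ Fintype.card σ) :
    (Matrix.of (fun i j : σ => if i = j then (0:ℤ) else 1)).charpoly
      = (X + 1) ^ (Fintype.card σ - 1) * (X - C ((Fintype.card σ : ℤ) - 1)) := by
  set m := Fintype.card σ with hm
  set F := FractionRing (Polynomial ℤ)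
  have hinj : Function.Injective (algebraMap (Polynomial ℤ) F) :=
    IsFractionRing.injective _ _
  apply hinj
  set φ := algebraMap (Polynomial ℤ) F with hφ
  set M := Matrix.of (fun i j : σ => if i = j then (0:ℤ) else 1) with hMdef
  have h1 : φ M.charpoly = ((charmatrix M).map φ).det := RingHom.map_det φ M.charmatrix
  have hXone : φ (X + 1) ≠ 0 := by
    intro hc
    have h0 : (X + 1 : Polynomial ℤ) = 0 := hinj (by simpa using hc)
    have := congrArg (fun p => p.coeff 1) h0
    simp [Polynomial.coeff_one] at this
  have h2 : (charmatrix M).map φ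
      = φ (X + 1) • (1 : Matrix σ σ F) - Matrix.of (fun _ _ => (1:F)) := by
    ext i j
    by_cases hij : i = j
    · subst hij
      simp [charmatrix_apply_eq, hMdef, _root_.map_add, _root_.map_one]
    · simp [charmatrix_apply_ne _ _ _ hij, hMdef, hij, Matrix.one_apply_ne hij]
  obtain ⟨k, hk⟩ : ∃ k, m = k + 1 := ⟨m - 1, by omega⟩
  rw [h1, h2, aux_det_field (φ (X+1)) hXone hk]
  rw [← hm, hk]
  have hC : ∀ z : ℤ, φ (C z) = (z : F) := fun z => by
    rw [← RingHom.comp_apply]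
    exact eq_intCast (φ.comp Polynomial.C) z
  rw [_root_.map_mul, map_pow, _root_.map_sub, hC]
  simp only [Nat.add_sub_cancel]
  rw [_root_.map_add, _root_.map_one]
  push_cast
  ring

end AuxStmt6

set_option maxHeartbeats 1000000 in
/-- characteristic polynomial of the adjacency matrix of the
commuting graph of `R × A`, for `R` a finite CC-ring with distinct centralizers
`S 0, …, S (n-1)` of non-central elements and `A` a finite commutative ring. -/
theorem stmt6 (R A : Type*) [NonUnitalRing R] [Fintype R]
    [NonUnitalCommRing A] [Fintype A]
    (hnc : ∃ a b : R, a * b ≠ b * a)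
    (hCC : ∀ x : R, x ∉ ringCenter R →
      ∀ a ∈ ringCentralizer x, ∀ b ∈ ringCentralizer x, a * b = b * a)
    (n : ℕ) (S : Fin n → Set R) (hinj : Function.Injective S)
    (hrange : Set.range S =
      {T : Set R | ∃ x : R, x ∉ ringCenter R ∧ T = ringCentralizer x}) :
    commCharpoly (R × A) ℤ =
      (X + 1) ^ ((∑ i, Fintype.card A * ((S i).ncard - (ringCenter R).ncard)) - n) *
        ∏ i, (X - C ((Fintype.card A : ℤ) *
          (((S i).ncard : ℤ) - ((ringCenter R).ncard : ℤ)) - 1)) := by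
  classical
  -- basic facts
  have hCself : ∀ x : R, x ∈ ringCentralizer x := fun x => rfl
  have hZsubC : ∀ x : R, ringCenter R ⊆ ringCentralizer x := fun x z hz => hz x
  have hcen : ∀ p : R × A, p ∈ ringCenter (R × A) ↔ p.1 ∈ ringCenter R := by
    intro p
    constructor
    · intro h r
      exact congrArg Prod.fst (h (r, 0))
    · intro h q
      have h1 : q.1 * p.1 = p.1 * q.1 := h q.1
      rw [Prod.ext_iff]
      exact ⟨h1, mul_comm _ _⟩
  have hcomm_iff : ∀ x y : R, x ∉ ringCenter R → y ∉ ringCenter R →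
      (x * y = y * x ↔ ringCentralizer x = ringCentralizer y) := by
    intro x y hx hy
    constructor
    · intro hxy
      apply Set.Subset.antisymm
      · intro z hz
        exact (hCC x hx z hz y hxy).symm
      · intro z hz
        exact (hCC y hy z hz x hxy.symm).symm
    · intro h
      have hx' : x ∈ ringCentralizer y := h ▸ hCself x
      exact hx'.symm
  have hSex : ∀ i : Fin n, ∃ y : R, y ∉ ringCenter R ∧ S i = ringCentralizer y := by
    intro i
    have : S i ∈ Set.range S := ⟨i, rfl⟩
    rw [hrange] at this
    exact this
  have hSmem : ∀ (i : Fin n) (x : R), x ∉ ringCenter R →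
      (ringCentralizer x = S i ↔ x ∈ S i) := by
    intro i x hx
    obtain ⟨y, hy, hSy⟩ := hSex i
    constructor
    · intro h
      rw [← h]; exact hCself x
    · intro h
      rw [hSy]
      apply (hcomm_iff x y hx hy).1
      have hxy : x ∈ ringCentralizer y := hSy ▸ h
      exact hxy.symm
  -- vertex nonncentrality
  have hvnc : ∀ v : {x : R × A // x ∉ ringCenter (R × A)}, v.1.1 ∉ ringCenter R :=
    fun v h => v.2 ((hcen v.1).2 h)
  have hfex : ∀ v : {x : R × A // x ∉ ringCenter (R × A)},
      ∃ i, S i = ringCentralizer v.1.1 := by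
    intro v
    have : ringCentralizer v.1.1 ∈ Set.range S := by
      rw [hrange]; exact ⟨v.1.1, hvnc v, rfl⟩
    obtain ⟨i, hi⟩ := this
    exact ⟨i, hi⟩
  set f : {x : R × A // x ∉ ringCenter (R × A)} → Fin n := fun v => (hfex v).choose with hfdef
  have hf : ∀ v, S (f v) = ringCentralizer v.1.1 := fun v => (hfex v).choose_spec
  have hf_eq : ∀ v i, f v = i ↔ v.1.1 ∈ S i := by
    intro v i
    constructor
    · intro h
      have := hf v
      rw [h] at this
      exact (hSmem i v.1.1 (hvnc v)).1 this.symm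
    · intro h
      apply hinj
      rw [hf v]
      exact (hSmem i v.1.1 (hvnc v)).2 h
  -- adjacency characterization
  have hadj : ∀ v w, (commGraph (R × A)).Adj v w ↔ v ≠ w ∧ f v = f w := by
    intro v w
    show (v ≠ w ∧ (v.1 : R × A) * w.1 = w.1 * v.1) ↔ _
    apply and_congr_right
    intro _
    have hm : (v.1 : R × A) * w.1 = w.1 * v.1 ↔ v.1.1 * w.1.1 = w.1.1 * v.1.1 := by
      rw [Prod.ext_iff]
      simp [mul_comm]
    rw [hm, hcomm_iff _ _ (hvnc v) (hvnc w), ← hf v, ← hf w]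
    exact ⟨fun h => hinj h, fun h => by rw [h]⟩
  -- block triangularity
  have hBT : ((commGraph (R × A)).adjMatrix ℤ).BlockTriangular f := by
    intro v w hlt
    rw [SimpleGraph.adjMatrix_apply, if_neg]
    intro hA
    exact absurd ((hadj v w).1 hA).2 (ne_of_gt hlt)
  have hsurj : Function.Surjective f := by
    intro i
    obtain ⟨y, hy, hSy⟩ := hSex i
    refine ⟨⟨(y, 0), fun h => hy ((hcen _).1 h)⟩, ?_⟩
    rw [hf_eq]
    show y ∈ S i
    rw [hSy]
    exact hCself y
  -- blocks are "complete graph" matrices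
  have hblock : ∀ i : Fin n,
      ((commGraph (R × A)).adjMatrix ℤ).toSquareBlock f i =
      Matrix.of (fun v w : {v // f v = i} => if v = w then (0:ℤ) else 1) := by
    intro i
    ext v w
    simp only [Matrix.toSquareBlock_def, SimpleGraph.adjMatrix_apply, Matrix.of_apply]
    by_cases h : v = w
    · subst h
      simp
    · rw [if_neg h, if_pos]
      rw [hadj]
      exact ⟨fun hh => h (Subtype.ext hh), v.2.trans w.2.symm⟩
  -- cardinalities
  have hZS : ∀ i, ringCenter R ⊆ S i := by
    intro i
    obtain ⟨y, hy, hSy⟩ := hSex i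
    rw [hSy]
    exact hZsubC y
  have hssub : ∀ i, ringCenter R ⊂ S i := by
    intro i
    obtain ⟨y, hy, hSy⟩ := hSex i
    refine ⟨hZS i, fun h => hy (h ?_)⟩
    rw [hSy]; exact hCself y
  have hltcard : ∀ i, (ringCenter R).ncard < (S i).ncard := fun i =>
    Set.ncard_lt_ncard (hssub i) (Set.toFinite _)
  have hcard : ∀ i : Fin n, Nat.card {v : {x : R × A // x ∉ ringCenter (R × A)} // f v = i}
      = Fintype.card A * ((S i).ncard - (ringCenter R).ncard) := by
    intro i
    have e1 : {v : {x : R × A // x ∉ ringCenter (R × A)} // f v = i}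
        ≃ {x : R // x ∈ S i \ ringCenter R} × A :=
      { toFun := fun v => (⟨v.1.1.1, (hf_eq v.1 i).1 v.2, hvnc v.1⟩, v.1.1.2)
        invFun := fun q => ⟨⟨(q.1.1, q.2), fun h => q.1.2.2 ((hcen _).1 h)⟩,
          (hf_eq _ i).2 q.1.2.1⟩
        left_inv := fun v => by
          apply Subtype.ext; apply Subtype.ext; rfl
        right_inv := fun q => by
          apply Prod.ext
          · apply Subtype.ext; rfl
          · rfl }
    rw [Nat.card_congr e1, Nat.card_prod]
    have h2 : Nat.card {x : R // x ∈ S i \ ringCenter R}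
        = (S i).ncard - (ringCenter R).ncard := by
      rw [← Set.ncard_diff (hZS i) (Set.toFinite _)]
      exact Nat.card_coe_set_eq _
    rw [h2, Nat.card_eq_fintype_card, mul_comm]
  have hone : ∀ i : Fin n, 1 ≤ Fintype.card A * ((S i).ncard - (ringCenter R).ncard) := by
    intro i
    have h1 : 0 < Fintype.card A := Fintype.card_pos
    have h2 : 0 < (S i).ncard - (ringCenter R).ncard := by
      have := hltcard i; omega
    exact Nat.one_le_iff_ne_zero.2 (Nat.mul_ne_zero (by omega) (by omega))
  -- main computation
  have hunfold : commCharpoly (R × A) ℤ = ((commGraph (R × A)).adjMatrix ℤ).charpoly := by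
    unfold commCharpoly
    congr!
  rw [hunfold, hBT.charpoly]
  refine Eq.trans (Finset.prod_subset (Finset.subset_univ _) ?_) ?_
  · intro a _ ha
    obtain ⟨v, hv⟩ := hsurj a
    refine absurd ?_ ha
    have hmem : ∀ (inst : DecidableEq (Fin n)), a ∈ @Finset.image _ _ inst f Finset.univ := by
      intro inst
      exact (@Finset.mem_image _ _ inst f Finset.univ a).2 ⟨v, Finset.mem_univ v, hv⟩
    exact hmem _
  have hterm : ∀ i : Fin n,
      (((commGraph (R × A)).adjMatrix ℤ).toSquareBlock f i).charpoly
      = (X + 1) ^ (Fintype.card A * ((S i).ncard - (ringCenter R).ncard) - 1) *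
        (X - C ((Fintype.card A : ℤ) *
          (((S i).ncard : ℤ) - ((ringCenter R).ncard : ℤ)) - 1)) := by
    intro i
    have hfc : Fintype.card {v : {x : R × A // x ∉ ringCenter (R × A)} // f v = i}
        = Fintype.card A * ((S i).ncard - (ringCenter R).ncard) := by
      rw [← Nat.card_eq_fintype_card, hcard i]
    rw [hblock i, aux_charpoly _ (by rw [hfc]; exact hone i), hfc]
    congr 2
    have hle : (ringCenter R).ncard ≤ (S i).ncard := le_of_lt (hltcard i)
    push_cast [Nat.cast_sub hle]
    ring
  have final : ∏ i : Fin n, (((commGraph (R × A)).adjMatrix ℤ).toSquareBlock f i).charpoly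
      = (X + 1) ^ ((∑ i, Fintype.card A * ((S i).ncard - (ringCenter R).ncard)) - n) *
        ∏ i, (X - C ((Fintype.card A : ℤ) *
          (((S i).ncard : ℤ) - ((ringCenter R).ncard : ℤ)) - 1)) := by
    refine (Finset.prod_congr rfl fun i _ => hterm i).trans ?_
    rw [Finset.prod_mul_distrib, Finset.prod_pow_eq_pow_sum]
    congr 2
    have hsum : ∀ (g : Fin n → ℕ), (∀ i, 1 ≤ g i) →
        ∑ i, (g i - 1) = (∑ i, g i) - n := by
      intro g hg
      have h1 : ∑ i, (g i - 1) + ∑ _i : Fin n, 1 = ∑ i, g i := by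
        rw [← Finset.sum_add_distrib]
        exact Finset.sum_congr rfl fun i _ => by have := hg i; omega
      simp only [Finset.sum_const, Finset.card_univ, Fintype.card_fin, smul_eq_mul, mul_one] at h1
      omega
    exact hsum _ hone
  refine Eq.trans ?_ final
  congr!
end

section
/- Let p be a prime and let R be a finite noncommutative ring such that the additive quotient group R/Z(R) is isomorphic to ℤ_p × ℤ_p. Then for every non-central element x of R, the centralizer C_R(x) is a commutative subring of R of cardinality p·|Z(R)| (in particular, R is a CC-ring). -/
open Polynomial

/-- if `R/Z(R) ≅ ℤ_p × ℤ_p` (as additive groups) then the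
centralizer of every non-central element is a commutative subring of
cardinality `p * |Z(R)|`; in particular `R` is a CC-ring. -/
theorem stmt7 (p : ℕ) (hp : p.Prime) (R : Type*) [NonUnitalRing R] [Fintype R]
    (hnc : ∃ a b : R, a * b ≠ b * a)
    (hiso : Nonempty ((R ⧸ centerAddSubgroup R) ≃+ (ZMod p × ZMod p))) :
    ∀ x : R, x ∉ ringCenter R →
      (∀ a ∈ ringCentralizer x, ∀ b ∈ ringCentralizer x,
        a * b = b * a ∧ a + b ∈ ringCentralizer x ∧ a * b ∈ ringCentralizer x) ∧
      (∀ a ∈ ringCentralizer x, -a ∈ ringCentralizer x) ∧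
      (ringCentralizer x).ncard = p * (ringCenter R).ncard := by
  classical
  haveI : Fact p.Prime := ⟨hp⟩
  obtain ⟨e⟩ := hiso
  set Z := centerAddSubgroup R with hZdef
  set Q := R ⧸ Z with hQdef
  intro x hx
  set C : AddSubgroup R :=
    { carrier := ringCentralizer x
      add_mem' := by intro a b ha hb; simp only [ringCentralizer, Set.mem_setOf_eq] at *
                     rw [mul_add, add_mul, ha, hb]
      zero_mem' := by simp [ringCentralizer]
      neg_mem' := by intro a ha; simp only [ringCentralizer, Set.mem_setOf_eq] at *
                     rw [mul_neg, neg_mul, ha] } with hCdef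
  have hZC : Z ≤ C := fun z hz => (hz x)
  have hxC : x ∈ C := rfl
  let φ : R →+ Q := QuotientAddGroup.mk' Z
  have hker : ∀ r : R, φ r = 0 ↔ r ∈ Z := fun r => QuotientAddGroup.eq_zero_iff r
  have hcardQ : Nat.card Q = p * p := by
    rw [Nat.card_congr e.toEquiv, Nat.card_prod, Nat.card_zmod]
  have hkill : ∀ q : Q, p • q = 0 := by
    intro q
    apply e.injective
    rw [map_nsmul, map_zero]
    ext <;> simp [nsmul_eq_mul, ZMod.natCast_self]
  have hxQ : φ x ≠ 0 := fun h => hx ((hker x).1 h)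
  set S : AddSubgroup Q := C.map φ with hSdef
  have hxS : φ x ∈ S := ⟨x, hxC, rfl⟩
  have hSne : S ≠ ⊤ := by
    intro hS
    apply hx
    intro r
    have hrS : φ r ∈ S := hS ▸ AddSubgroup.mem_top _
    obtain ⟨c, hc, hcr⟩ := hrS
    have hrc : r - c ∈ Z := by
      rw [← hker]
      simp [φ, map_sub, hcr]
    have hcom : x * (r - c) = (r - c) * x := hrc x
    have hc' : x * c = c * x := hc
    have h2 : x * r - x * c = r * x - c * x := by
      rw [← mul_sub, ← sub_mul]; exact hcom
    rw [hc'] at h2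
    exact (sub_left_injective h2).symm
  -- order of φ x is p
  have hord : addOrderOf (φ x) = p := addOrderOf_eq_prime (hkill _) hxQ
  have hzmul : AddSubgroup.zmultiples (φ x) ≤ S :=
    (AddSubgroup.zmultiples_le).2 hxS
  have hczmul : Nat.card (AddSubgroup.zmultiples (φ x)) = p := by
    rw [Nat.card_zmultiples, hord]
  have hcS : Nat.card S = p := by
    have h1 : Nat.card S ∣ p * p := hcardQ ▸ AddSubgroup.card_addSubgroup_dvd_card S
    have h2 : p ∣ Nat.card S := hczmul ▸ AddSubgroup.card_dvd_of_le hzmul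
    obtain ⟨m, hm⟩ := h2
    have hm1 : m ∣ p := by
      have := (mul_dvd_mul_iff_left (a := p) hp.pos.ne').1 (hm ▸ h1)
      exact this
    rcases (Nat.Prime.eq_one_or_self_of_dvd hp m hm1) with h | h
    · rw [hm, h, mul_one]
    · exfalso
      apply hSne
      apply AddSubgroup.eq_top_of_le_card
      rw [hcardQ, hm, h]
  have hSeq : AddSubgroup.zmultiples (φ x) = S :=
    AddSubgroup.eq_of_le_of_card_ge hzmul (by rw [hcS, hczmul])
  -- every element of C is k • x + central
  have hdecomp : ∀ a ∈ C, ∃ (k : ℤ) (z : R), z ∈ Z ∧ a = k • x + z := by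
    intro a ha
    have : φ a ∈ AddSubgroup.zmultiples (φ x) := hSeq ▸ ⟨a, ha, rfl⟩
    obtain ⟨k, hk⟩ := this
    change k • φ x = φ a at hk
    have : a - k • x ∈ Z := by
      rw [← hker]
      rw [map_sub, map_zsmul, hk, sub_self]
    exact ⟨k, a - k • x, this, by abel⟩
  constructor
  · intro a ha b hb
    refine ⟨?_, C.add_mem ha hb, ?_⟩
    · obtain ⟨k, z, hz, rfl⟩ := hdecomp a ha
      obtain ⟨l, w, hw, rfl⟩ := hdecomp b hb
      have hz' : ∀ r : R, r * z = z * r := hz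
      have hw' : ∀ r : R, r * w = w * r := hw
      simp only [add_mul, mul_add, smul_mul_assoc, mul_smul_comm, smul_add]
      rw [hz' x, hz' w, ← hw' x, smul_comm k l]
      abel
    · show x * (a * b) = (a * b) * x
      have ha' : x * a = a * x := ha
      have hb' : x * b = b * x := hb
      rw [← mul_assoc, ha', mul_assoc, hb', mul_assoc]
  refine ⟨fun a ha => C.neg_mem ha, ?_⟩
  -- cardinality
  let f : C →+ Q := φ.comp C.subtype
  have hrange : f.range = S := by
    ext q
    simp only [AddMonoidHom.mem_range, f, AddMonoidHom.coe_comp, Function.comp_apply,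
      AddSubgroup.coe_subtype, hSdef, AddSubgroup.mem_map]
    constructor
    · rintro ⟨⟨c, hc⟩, rfl⟩; exact ⟨c, hc, rfl⟩
    · rintro ⟨c, hc, rfl⟩; exact ⟨⟨c, hc⟩, rfl⟩
  have hkerf : f.ker = Z.addSubgroupOf C := by
    ext ⟨c, hc⟩
    simp only [AddMonoidHom.mem_ker, f, AddMonoidHom.coe_comp, Function.comp_apply,
      AddSubgroup.coe_subtype, AddSubgroup.mem_addSubgroupOf]
    exact hker c
  have hcardC : Nat.card C = p * Nat.card Z := by
    have h1 : Nat.card C = Nat.card (C ⧸ f.ker) * Nat.card f.ker :=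
      AddSubgroup.card_eq_card_quotient_mul_card_addSubgroup f.ker
    have h2 : Nat.card (C ⧸ f.ker) = Nat.card f.range :=
      Nat.card_congr (QuotientAddGroup.quotientKerEquivRange f).toEquiv
    have h3 : Nat.card f.ker = Nat.card Z := by
      rw [hkerf]
      exact Nat.card_congr (AddSubgroup.addSubgroupOfEquivOfLe hZC).toEquiv
    rw [h1, h2, h3, hrange, hcS]
  have e1 : (ringCentralizer x).ncard = Nat.card C := by
    rw [← Nat.card_coe_set_eq]; rfl
  have e2 : (ringCenter R).ncard = Nat.card Z := by
    rw [← Nat.card_coe_set_eq]; rfl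
  rw [e1, e2, hcardC]
end

section
/- Let p be a prime and let R be a finite noncommutative ring such that the additive quotient group R/Z(R) is isomorphic to ℤ_p × ℤ_p. Then the commuting graph Γ_R has exactly p + 1 connected components, each of which is a clique on (p − 1)·|Z(R)| vertices. -/
open Polynomial

set_option linter.unusedSectionVars false

section Aux

variable {p : ℕ} [Fact p.Prime]

private lemma stmt8_frank2 : Module.finrank (ZMod p) (ZMod p × ZMod p) = 2 := by
  rw [Module.finrank_prod, Module.finrank_self]

private lemma stmt8_line_eq {v : ZMod p × ZMod p} (hv : v ≠ 0)
    (S : Submodule (ZMod p) (ZMod p × ZMod p)) (hvS : v ∈ S) (hS : S ≠ ⊤) :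
    S = Submodule.span (ZMod p) {v} := by
  have h1 : Submodule.span (ZMod p) {v} ≤ S := by
    rw [Submodule.span_le, Set.singleton_subset_iff]; exact hvS
  have h2 : Module.finrank (ZMod p) S < 2 := by
    rw [← stmt8_frank2 (p := p)]
    exact Submodule.finrank_lt hS
  have h3 : Module.finrank (ZMod p) (Submodule.span (ZMod p) {v}) = 1 :=
    finrank_span_singleton hv
  exact (Submodule.eq_of_le_of_finrank_le h1 (by rw [h3]; omega)).symm

private lemma stmt8_span_ne_top {v : ZMod p × ZMod p} (hv : v ≠ 0) :
    Submodule.span (ZMod p) {v} ≠ ⊤ := by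
  intro h
  have h3 : Module.finrank (ZMod p) (Submodule.span (ZMod p) {v}) = 1 :=
    finrank_span_singleton hv
  rw [h, finrank_top, stmt8_frank2] at h3
  omega

private lemma stmt8_span_eq {v w : ZMod p × ZMod p} (hv : v ≠ 0) (hw : w ≠ 0)
    (h : w ∈ Submodule.span (ZMod p) {v}) :
    Submodule.span (ZMod p) {v} = Submodule.span (ZMod p) {w} :=
  stmt8_line_eq hw _ h (stmt8_span_ne_top hv)


variable {R : Type*} [NonUnitalRing R] [Fintype R]

private def stmt8F (φ : (R ⧸ centerAddSubgroup R) ≃+ (ZMod p × ZMod p)) :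
    R →+ ZMod p × ZMod p :=
  φ.toAddMonoidHom.comp (QuotientAddGroup.mk' (centerAddSubgroup R))

variable (φ : (R ⧸ centerAddSubgroup R) ≃+ (ZMod p × ZMod p))

private lemma stmt8F_surj : Function.Surjective (stmt8F φ) :=
  φ.surjective.comp (QuotientAddGroup.mk'_surjective _)

private lemma stmt8F_zero_iff (r : R) : stmt8F φ r = 0 ↔ r ∈ ringCenter R := by
  have h1 : stmt8F φ r = 0 ↔ ((r : R ⧸ centerAddSubgroup R)) = 0 := by
    rw [show stmt8F φ r = φ (r : R ⧸ centerAddSubgroup R) from rfl,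
      EmbeddingLike.map_eq_zero_iff]
  rw [h1, QuotientAddGroup.eq_zero_iff]
  exact Iff.rfl

private def stmt8Cent (x : R) : AddSubgroup R where
  carrier := ringCentralizer x
  add_mem' := by
    intro a b ha hb
    show x * (a + b) = (a + b) * x
    rw [mul_add, add_mul, show x * a = a * x from ha, show x * b = b * x from hb]
  zero_mem' := by show x * 0 = 0 * x; simp
  neg_mem' := by
    intro a ha
    show x * (-a) = (-a) * x
    rw [mul_neg, neg_mul, show x * a = a * x from ha]

private lemma stmt8_commute_iff {x : R} (hx : x ∉ ringCenter R) (y : R) :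
    x * y = y * x ↔ stmt8F φ y ∈ Submodule.span (ZMod p) {stmt8F φ x} := by
  classical
  have key : ∀ y c : R, x * c = c * x → stmt8F φ (y - c) = 0 → x * y = y * x := by
    intro y c hc h0
    have hz : (y - c) ∈ ringCenter R := (stmt8F_zero_iff φ _).1 h0
    have h1 : x * (y - c) = (y - c) * x := hz x
    rw [mul_sub, sub_mul, hc] at h1
    exact sub_left_inj.mp h1
  set A : AddSubgroup (ZMod p × ZMod p) := (stmt8Cent x).map (stmt8F φ) with hA
  set S : Submodule (ZMod p) (ZMod p × ZMod p) := AddSubgroup.toZModSubmodule p A with hS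
  have hxS : stmt8F φ x ∈ S := by
    rw [hS, AddSubgroup.mem_toZModSubmodule]
    exact ⟨x, rfl, rfl⟩
  have hST : S ≠ ⊤ := by
    intro h
    apply hx
    intro r
    have hr : stmt8F φ r ∈ A := by
      have : stmt8F φ r ∈ S := by rw [h]; trivial
      rwa [hS, AddSubgroup.mem_toZModSubmodule] at this
    obtain ⟨c, hc, hfc⟩ := hr
    have h0 : stmt8F φ (r - c) = 0 := by rw [map_sub, hfc, sub_self]
    exact (key r c hc h0).symm
  have hx0 : stmt8F φ x ≠ 0 := fun h => hx ((stmt8F_zero_iff φ x).1 h)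
  have hSeq : S = Submodule.span (ZMod p) {stmt8F φ x} := stmt8_line_eq hx0 S hxS hST
  constructor
  · intro h
    rw [← hSeq]
    rw [hS, AddSubgroup.mem_toZModSubmodule]
    exact ⟨y, h, rfl⟩
  · intro h
    rw [← hSeq, hS, AddSubgroup.mem_toZModSubmodule] at h
    obtain ⟨c, hc, hfc⟩ := h
    exact key y c hc (by rw [map_sub, hfc, sub_self])

private lemma stmt8_commute_iff_span {x y : R} (hx : x ∉ ringCenter R)
    (hy : y ∉ ringCenter R) :
    x * y = y * x ↔
      Submodule.span (ZMod p) {stmt8F φ x} = Submodule.span (ZMod p) {stmt8F φ y} := by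
  have hx0 : stmt8F φ x ≠ 0 := fun h => hx ((stmt8F_zero_iff φ x).1 h)
  have hy0 : stmt8F φ y ≠ 0 := fun h => hy ((stmt8F_zero_iff φ y).1 h)
  rw [stmt8_commute_iff φ hx y]
  constructor
  · exact fun h => stmt8_span_eq hx0 hy0 h
  · intro h; rw [h]; exact Submodule.mem_span_singleton_self _

private lemma stmt8_adj_span {u w : {x : R // x ∉ ringCenter R}}
    (h : (commGraph R).Adj u w) :
    Submodule.span (ZMod p) {stmt8F φ u.1} = Submodule.span (ZMod p) {stmt8F φ w.1} :=
  (stmt8_commute_iff_span φ u.2 w.2).1 h.2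

private lemma stmt8_reach {u w : {x : R // x ∉ ringCenter R}} :
    (commGraph R).connectedComponentMk u = (commGraph R).connectedComponentMk w ↔
      Submodule.span (ZMod p) {stmt8F φ u.1} = Submodule.span (ZMod p) {stmt8F φ w.1} := by
  rw [SimpleGraph.ConnectedComponent.eq]
  constructor
  · intro h
    obtain ⟨pw⟩ := h
    induction pw with
    | nil => rfl
    | cons h q ih => exact (stmt8_adj_span φ h).trans ih
  · intro h
    by_cases he : u = w
    · subst he; exact SimpleGraph.Reachable.refl u
    · exact SimpleGraph.Adj.reachable
        ⟨he, (stmt8_commute_iff_span φ u.2 w.2).2 h⟩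

include φ in
private lemma stmt8_supp_card (x : {x : R // x ∉ ringCenter R}) :
    ((commGraph R).connectedComponentMk x).supp.ncard
      = (p - 1) * (ringCenter R).ncard := by
  classical
  haveI : NeZero p := ⟨(Fact.out : p.Prime).ne_zero⟩
  have hsurj : Function.Surjective (stmt8F φ) := stmt8F_surj φ
  set s : ZMod p × ZMod p → R := Function.surjInv hsurj with hsdef
  have hs : ∀ v, stmt8F φ (s v) = v := fun v => Function.surjInv_eq hsurj v
  set L := Submodule.span (ZMod p) {stmt8F φ x.1} with hL
  have hx0 : stmt8F φ x.1 ≠ 0 := fun h => x.2 ((stmt8F_zero_iff φ _).1 h)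
  have hmem_iff : ∀ v : {x : R // x ∉ ringCenter R},
      v ∈ ((commGraph R).connectedComponentMk x).supp ↔ stmt8F φ v.1 ∈ L := by
    intro v
    have hv0 : stmt8F φ v.1 ≠ 0 := fun h => v.2 ((stmt8F_zero_iff φ _).1 h)
    rw [SimpleGraph.ConnectedComponent.mem_supp_iff, stmt8_reach φ]
    constructor
    · intro h; rw [hL, ← h]; exact Submodule.mem_span_singleton_self _
    · intro h
      exact (stmt8_line_eq hv0 _ h (stmt8_span_ne_top hx0)).symm
  have hzero : ∀ z ∈ ringCenter R, stmt8F φ z = 0 := fun z hz => (stmt8F_zero_iff φ z).2 hz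
  have e : ((commGraph R).connectedComponentMk x).supp ≃
      ({w : L // (w : ZMod p × ZMod p) ≠ 0} × (ringCenter R)) :=
    { toFun := fun v =>
        (⟨⟨stmt8F φ v.1.1, (hmem_iff v.1).1 v.2⟩,
          fun h => v.1.2 ((stmt8F_zero_iff φ _).1 h)⟩,
         ⟨v.1.1 - s (stmt8F φ v.1.1),
          (stmt8F_zero_iff φ _).1 (by rw [map_sub, hs, sub_self])⟩)
      invFun := fun q =>
        ⟨⟨s (q.1.1 : ZMod p × ZMod p) + (q.2 : R), by
            intro hc
            apply q.1.2
            have h0 : stmt8F φ (s (q.1.1 : ZMod p × ZMod p) + (q.2 : R)) = 0 :=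
              (stmt8F_zero_iff φ _).2 hc
            rw [map_add, hs, hzero _ q.2.2, add_zero] at h0
            exact h0⟩, by
          rw [hmem_iff]
          show stmt8F φ _ ∈ L
          rw [map_add, hs, hzero _ q.2.2, add_zero]
          exact q.1.1.2⟩
      left_inv := by
        intro v
        apply Subtype.ext
        apply Subtype.ext
        show s (stmt8F φ v.1.1) + (v.1.1 - s (stmt8F φ v.1.1)) = v.1.1
        abel
      right_inv := by
        rintro ⟨⟨⟨w, hwL⟩, hw0⟩, ⟨z, hz⟩⟩
        have hF : stmt8F φ (s w + z) = w := by
          rw [map_add, hs, hzero _ hz, add_zero]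
        refine Prod.ext ?_ ?_
        · apply Subtype.ext
          apply Subtype.ext
          exact hF
        · apply Subtype.ext
          show (s w + z) - s (stmt8F φ (s w + z)) = z
          rw [hF]
          abel }
  rw [← Nat.card_coe_set_eq, Nat.card_congr e, Nat.card_prod,
    Nat.card_coe_set_eq]
  have hcard : Nat.card {w : L // (w : ZMod p × ZMod p) ≠ 0} = p - 1 := by
    haveI : Fintype L := Fintype.ofFinite L
    have h1 : Fintype.card L = p := by
      rw [Module.card_eq_pow_finrank (K := ZMod p) (V := L), ZMod.card, hL,
        finrank_span_singleton hx0, pow_one]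
    have e3 : {w : L // (w : ZMod p × ZMod p) = 0} ≃ {w : L // w = 0} :=
      Equiv.subtypeEquivRight fun w => Submodule.coe_eq_zero
    have h2 : Fintype.card {w : L // ((w : ZMod p × ZMod p) = 0)} = 1 := by
      rw [Fintype.card_congr e3, Fintype.card_subtype_eq]
    rw [Nat.card_eq_fintype_card, Fintype.card_subtype_compl, h1, h2]
  rw [hcard]

end Aux

/-- if `R/Z(R) ≅ ℤ_p × ℤ_p` then the commuting graph has exactly
`p + 1` connected components, each a clique on `(p-1)*|Z(R)|` vertices. -/
theorem stmt8 (p : ℕ) (hp : p.Prime) (R : Type*) [NonUnitalRing R] [Fintype R]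
    (hnc : ∃ a b : R, a * b ≠ b * a)
    (hiso : Nonempty ((R ⧸ centerAddSubgroup R) ≃+ (ZMod p × ZMod p))) :
    Nat.card (commGraph R).ConnectedComponent = p + 1 ∧
    ∀ c : (commGraph R).ConnectedComponent,
      c.supp.ncard = (p - 1) * (ringCenter R).ncard ∧
      ∀ u ∈ c.supp, ∀ w ∈ c.supp, u ≠ w → (commGraph R).Adj u w := by
  classical
  haveI : Fact p.Prime := ⟨hp⟩
  haveI : NeZero p := ⟨hp.ne_zero⟩
  obtain ⟨φ⟩ := hiso
  have hsupp : ∀ c : (commGraph R).ConnectedComponent,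
      c.supp.ncard = (p - 1) * (ringCenter R).ncard ∧
      ∀ u ∈ c.supp, ∀ w ∈ c.supp, u ≠ w → (commGraph R).Adj u w := by
    intro c
    obtain ⟨x, rfl⟩ := c.exists_rep
    refine ⟨stmt8_supp_card φ x, ?_⟩
    intro u hu w hw huw
    replace hu : (commGraph R).connectedComponentMk u = (commGraph R).connectedComponentMk x := hu
    replace hw : (commGraph R).connectedComponentMk w = (commGraph R).connectedComponentMk x := hw
    have h : Submodule.span (ZMod p) {stmt8F φ u.1}
        = Submodule.span (ZMod p) {stmt8F φ w.1} :=
      ((stmt8_reach φ).1 hu).trans ((stmt8_reach φ).1 hw).symm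
    exact ⟨huw, (stmt8_commute_iff_span φ u.2 w.2).2 h⟩
  refine ⟨?_, hsupp⟩
  haveI : Fintype {x : R // x ∉ ringCenter R} := Fintype.ofFinite _
  haveI : Fintype (commGraph R).ConnectedComponent := Fintype.ofFinite _
  have hZ1 : Nat.card (centerAddSubgroup R) = (ringCenter R).ncard := by
    rw [← Nat.card_coe_set_eq]
    rfl
  have hR : Nat.card R = p * p * (ringCenter R).ncard := by
    rw [AddSubgroup.card_eq_card_quotient_mul_card_addSubgroup (centerAddSubgroup R),
      Nat.card_congr φ.toEquiv, Nat.card_prod, Nat.card_zmod, hZ1]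
  have hX : Nat.card {x : R // x ∉ ringCenter R}
      = (p * p - 1) * (ringCenter R).ncard := by
    have h1 : Nat.card {x : R // x ∉ ringCenter R}
        = Nat.card R - (ringCenter R).ncard := by
      rw [Nat.card_eq_fintype_card, Nat.card_eq_fintype_card,
        Fintype.card_subtype_compl]
      congr 1
      rw [← Nat.card_coe_set_eq, Nat.card_eq_fintype_card]
    rw [h1, hR, Nat.sub_mul, one_mul]
  have hfiber : ∀ c : (commGraph R).ConnectedComponent,
      Nat.card {v : {x : R // x ∉ ringCenter R} //
        (commGraph R).connectedComponentMk v = c}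
        = (p - 1) * (ringCenter R).ncard := by
    intro c
    rw [Nat.card_congr (Equiv.subtypeEquivRight
      (fun v => (SimpleGraph.ConnectedComponent.mem_supp_iff c v).symm)),
      Nat.card_coe_set_eq, (hsupp c).1]
  have hsum : Nat.card {x : R // x ∉ ringCenter R}
      = Nat.card (commGraph R).ConnectedComponent
        * ((p - 1) * (ringCenter R).ncard) := by
    rw [Nat.card_congr (Equiv.sigmaFiberEquiv (commGraph R).connectedComponentMk).symm,
      Nat.card_eq_fintype_card, Fintype.card_sigma]
    rw [Finset.sum_congr rfl (fun c _ => by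
      rw [← Nat.card_eq_fintype_card, hfiber c])]
    rw [Finset.sum_const, Finset.card_univ, smul_eq_mul, Nat.card_eq_fintype_card]
  have h2 : p * p - 1 = (p + 1) * (p - 1) := by
    have hp2 : 2 ≤ p := hp.two_le
    obtain ⟨q, rfl⟩ : ∃ q, p = q + 1 := ⟨p - 1, by omega⟩
    have e1 : (q + 1) * (q + 1) = q * q + 2 * q + 1 := by ring
    have e2 : (q + 1 + 1) * q = q * q + 2 * q := by ring
    rw [e1, Nat.add_sub_cancel, Nat.add_sub_cancel, e2]
  have key : Nat.card (commGraph R).ConnectedComponent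
      * ((p - 1) * (ringCenter R).ncard)
      = (p + 1) * ((p - 1) * (ringCenter R).ncard) := by
    rw [← hsum, hX, h2, mul_assoc]
  have hZpos : 0 < (ringCenter R).ncard := by
    rw [← Nat.card_coe_set_eq]
    haveI : Nonempty (ringCenter R) := ⟨⟨0, fun r => by simp⟩⟩
    exact Nat.card_pos
  have hmpos : 0 < (p - 1) * (ringCenter R).ncard := by
    have : 2 ≤ p := hp.two_le
    have : 0 < p - 1 := by omega
    exact Nat.mul_pos this hZpos
  exact Nat.eq_of_mul_eq_mul_right hmpos key
end

section
/- Let p be a prime and let R be a finite noncommutative ring such that the additive quotient group R/Z(R) is isomorphic to ℤ_p × ℤ_p. Then the characteristic polynomial of the adjacency matrix of the commuting graph Γ_R equals (X + 1)^{(p² − 1)|Z(R)| − p − 1} · (X − ((p − 1)|Z(R)| − 1))^{p + 1}. -/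
open Polynomial

open Polynomial Matrix

lemma det_smul_one_add_smul_allOnes {S : Type*} [CommRing S] (m : ℕ) (hm : 0 < m) (a b : S) :
    (a • (1 : Matrix (Fin m) (Fin m) S) + b • Matrix.of (fun _ _ => (1:S))).det
      = a ^ (m-1) * (a + m * b) := by
  classical
  set g : Fin m → Fin m → S := fun _ _ => b with hg
  set h : Fin m → Fin m → S := fun i => a • (Pi.single i 1 : Fin m → S) with hh
  have hMath : Matrix.of h = a • (1 : Matrix (Fin m) (Fin m) S) := by
    ext i j
    by_cases hij : i = j <;> simp [hh, Matrix.one_apply, Pi.single_apply, hij, eq_comm]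
  have hMat : (a • (1 : Matrix (Fin m) (Fin m) S) + b • Matrix.of (fun _ _ => (1:S)))
      = Matrix.of (g + h) := by
    ext i j
    by_cases hij : i = j <;>
      simp [hg, hh, Matrix.one_apply, Pi.single_apply, hij, add_comm, eq_comm]
  rw [hMat]
  have expand : Matrix.det (Matrix.of (g + h))
      = ∑ s : Finset (Fin m), Matrix.det (Matrix.of (s.piecewise g h)) :=
    (Matrix.detRowAlternating : (Fin m → S) [⋀^Fin m]→ₗ[S] S).toMultilinearMap.map_add_univ g h
  rw [expand]
  -- terms with at least two rows in s vanish
  have hF2 : ∀ s : Finset (Fin m), 1 < s.card → Matrix.det (Matrix.of (s.piecewise g h)) = 0 := by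
    intro s hs
    obtain ⟨i, hi, j, hj, hij⟩ := Finset.one_lt_card.mp hs
    apply Matrix.det_zero_of_row_eq hij
    funext k
    simp [Finset.piecewise_eq_of_mem _ _ _ hi, Finset.piecewise_eq_of_mem _ _ _ hj, hg]
  -- the matrix for singletons
  have hsing : ∀ i : Fin m, Matrix.det (Matrix.of (({i} : Finset (Fin m)).piecewise g h))
      = b * a ^ (m - 1) := by
    intro i
    have h1 : Matrix.of (({i} : Finset (Fin m)).piecewise g h)
        = (a • (1 : Matrix (Fin m) (Fin m) S)).updateRow i (b • (fun _ => (1:S))) := by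
      rw [← hMath]
      ext k j
      by_cases hk : k = i
      · subst hk; simp [Finset.piecewise_singleton, Matrix.updateRow_apply, hg]
      · simp [Finset.piecewise_singleton, Matrix.updateRow_apply, hk, Function.update_of_ne hk]
    rw [h1, Matrix.det_updateRow_smul]
    congr 1
    -- det of (a•1) with row i replaced by all ones
    have hsplit : (fun _ => (1:S)) = (Pi.single i 1 : Fin m → S)
        + ((fun _ => (1:S)) - Pi.single i 1) := by ring
    rw [hsplit, Matrix.det_updateRow_add]
    have hz : ((a • (1 : Matrix (Fin m) (Fin m) S)).updateRow i
        ((fun _ => (1:S)) - Pi.single i 1)).det = 0 := by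
      apply Matrix.det_eq_zero_of_column_eq_zero i
      intro k
      by_cases hk : k = i
      · subst hk; simp
      · simp [Matrix.updateRow_apply, hk, Matrix.one_apply, hk]
    rw [hz, add_zero]
    have hd : (a • (1 : Matrix (Fin m) (Fin m) S)).updateRow i (Pi.single i 1)
        = Matrix.diagonal (Function.update (fun _ => a) i 1) := by
      ext k j
      by_cases hk : k = i
      · subst hk
        by_cases hj : j = k
        · subst hj; simp
        · simp [Matrix.updateRow_apply, Matrix.diagonal_apply, Function.update_apply,
            Pi.single_apply, hj, Ne.symm hj]
      · by_cases hj : k = j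
        · subst hj
          simp [Matrix.updateRow_apply, hk, Matrix.diagonal_apply, Function.update_apply,
            Matrix.one_apply]
        · simp [Matrix.updateRow_apply, hk, hj, Matrix.diagonal_apply, Function.update_apply,
            Matrix.one_apply]
    rw [hd, Matrix.det_diagonal, Finset.prod_update_of_mem (Finset.mem_univ i)]
    simp [Finset.prod_const, Finset.card_sdiff, Finset.card_univ]
  -- restrict the sum
  have hsub : (∑ s : Finset (Fin m), Matrix.det (Matrix.of (s.piecewise g h)))
      = ∑ s ∈ (Finset.univ : Finset (Finset (Fin m))).filter (fun s => s.card ≤ 1),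
          Matrix.det (Matrix.of (s.piecewise g h)) := by
    symm
    apply Finset.sum_subset (Finset.filter_subset _ _)
    intro s _ hs
    simp only [Finset.mem_filter, Finset.mem_univ, true_and, not_le] at hs
    exact hF2 s hs
  rw [hsub]
  have hset : (Finset.univ : Finset (Finset (Fin m))).filter (fun s => s.card ≤ 1)
      = insert (∅ : Finset (Fin m)) (Finset.univ.image (fun i : Fin m => {i})) := by
    have : Nonempty (Fin m) := ⟨⟨0, hm⟩⟩
    ext s
    simp only [Finset.mem_filter, Finset.mem_univ, true_and, Finset.mem_insert, Finset.mem_image]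
    constructor
    · intro hs
      rcases Finset.card_le_one_iff_subset_singleton.mp hs with ⟨x, hx⟩
      rcases Finset.subset_singleton_iff.mp hx with h | h
      · exact Or.inl h
      · exact Or.inr ⟨x, h.symm⟩
    · rintro (rfl | ⟨x, -, rfl⟩) <;> simp
  rw [hset, Finset.sum_insert (by simp), Finset.sum_image (fun x _ y _ h => Finset.singleton_injective h)]
  have h0 : Matrix.det (Matrix.of ((∅ : Finset (Fin m)).piecewise g h)) = a ^ m := by
    rw [Finset.piecewise_empty, hMath, Matrix.det_smul, Matrix.det_one]
    simp [Finset.card_univ]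
  rw [h0]
  simp only [hsing]
  rw [Finset.sum_const, Finset.card_univ, Fintype.card_fin]
  have : a ^ m = a ^ (m - 1) * a := by
    rw [← pow_succ]
    congr 1
    omega
  rw [this]
  ring

open Polynomial Matrix

lemma charmatrix_blockDiagonal {n o R : Type*} [Fintype n] [DecidableEq n] [Fintype o]
    [DecidableEq o] [CommRing R] (M : o → Matrix n n R) :
    charmatrix (blockDiagonal M) = blockDiagonal (fun k => charmatrix (M k)) := by
  ext ⟨i, k⟩ ⟨j, l⟩
  by_cases hkl : k = l
  · subst hkl
    by_cases hij : i = j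
    · subst hij; simp [charmatrix_apply, blockDiagonal_apply]
    · simp [charmatrix_apply, blockDiagonal_apply, diagonal_apply, hij, Prod.ext_iff]
  · simp [charmatrix_apply, blockDiagonal_apply, diagonal_apply, hkl, Prod.ext_iff]

lemma charpoly_blockDiagonal {n o R : Type*} [Fintype n] [DecidableEq n] [Fintype o]
    [DecidableEq o] [CommRing R] (M : o → Matrix n n R) :
    (blockDiagonal M).charpoly = ∏ k, (M k).charpoly := by
  rw [Matrix.charpoly, charmatrix_blockDiagonal, det_blockDiagonal]
  rfl

lemma charpoly_clique (m : ℕ) (hm : 0 < m) :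
    (Matrix.of (fun i j : Fin m => if i = j then (0:ℤ) else 1)).charpoly
      = (X + 1) ^ (m - 1) * (X - C ((m : ℤ) - 1)) := by
  have key : charmatrix (Matrix.of (fun i j : Fin m => if i = j then (0:ℤ) else 1))
      = (X + 1 : ℤ[X]) • (1 : Matrix (Fin m) (Fin m) ℤ[X])
        + (-1 : ℤ[X]) • Matrix.of (fun _ _ => (1:ℤ[X])) := by
    ext i j
    by_cases hij : i = j
    · subst hij; simp [charmatrix_apply, Matrix.one_apply]
    · simp [charmatrix_apply, hij, Matrix.one_apply, diagonal_apply]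
  rw [Matrix.charpoly, key, det_smul_one_add_smul_allOnes m hm]
  congr 1
  rw [map_sub, map_natCast C, _root_.map_one]
  ring

section Plane
variable {p : ℕ} [Fact p.Prime]

lemma plane_span (u v : ZMod p × ZMod p) (hu : u ≠ 0) (hv : ¬ ∃ k : ZMod p, v = k • u)
    (w : ZMod p × ZMod p) : ∃ a b : ZMod p, w = a • u + b • v := by
  have hD : u.1 * v.2 - u.2 * v.1 ≠ 0 := by
    intro h0
    apply hv
    by_cases h1 : u.1 = 0
    · have h2 : u.2 ≠ 0 := by
        intro h2; exact hu (Prod.ext h1 h2)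
      have hv1 : v.1 = 0 := by
        rw [h1, zero_mul, zero_sub, neg_eq_zero] at h0
        rcases mul_eq_zero.mp h0 with h | h
        · exact absurd h h2
        · exact h
      refine ⟨v.2 * u.2⁻¹, ?_⟩
      apply Prod.ext
      · simp [h1, hv1, Prod.smul_fst]
      · simp [Prod.smul_snd]
        field_simp
    · refine ⟨v.1 * u.1⁻¹, ?_⟩
      apply Prod.ext
      · simp [Prod.smul_fst]
        field_simp
      · simp [Prod.smul_snd]
        field_simp
        linear_combination h0
  set D := u.1 * v.2 - u.2 * v.1 with hDdef
  refine ⟨(w.1 * v.2 - w.2 * v.1) * D⁻¹, (u.1 * w.2 - u.2 * w.1) * D⁻¹, ?_⟩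
  apply Prod.ext
  · simp [Prod.smul_fst]
    field_simp
    ring
  · simp [Prod.smul_snd]
    field_simp
    ring
end Plane

-- ℕ-smul commutation helpers in a non-unital ring
lemma mul_nsmul_right {R : Type*} [NonUnitalRing R] (n : ℕ) (a b : R) :
    a * (n • b) = n • (a * b) := by
  induction n with
  | zero => simp
  | succ k ih => simp [succ_nsmul, mul_add, ih]

lemma nsmul_mul_left {R : Type*} [NonUnitalRing R] (n : ℕ) (a b : R) :
    (n • a) * b = n • (a * b) := by
  induction n with
  | zero => simp
  | succ k ih => simp [succ_nsmul, add_mul, ih]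

/-- commuting as a setoid on non-central elements, given transitivity -/
def commSetoid (R : Type*) [NonUnitalRing R]
    (htrans : ∀ x y z : {x : R // x ∉ ringCenter R},
      (x:R)*y = y*x → (y:R)*z = z*y → (x:R)*z = z*x) :
    Setoid {x : R // x ∉ ringCenter R} :=
  ⟨fun x y => (x:R)*y = y*x,
    ⟨fun _ => rfl, fun h => h.symm, fun h1 h2 => htrans _ _ _ h1 h2⟩⟩

section Main

variable {p : ℕ} {R : Type*} [NonUnitalRing R]

theorem stmt9' (p : ℕ) (hp : p.Prime) (R : Type*) [NonUnitalRing R] [Fintype R]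
    (hnc : ∃ a b : R, a * b ≠ b * a)
    (hiso : Nonempty ((R ⧸ centerAddSubgroup R) ≃+ (ZMod p × ZMod p))) :
    commCharpoly R ℤ =
      (X + 1) ^ ((p ^ 2 - 1) * (ringCenter R).ncard - p - 1) *
        (X - C (((p : ℤ) - 1) * ((ringCenter R).ncard : ℤ) - 1)) ^ (p + 1) := by
  classical
  have hfact : Fact p.Prime := ⟨hp⟩
  obtain ⟨φ⟩ := hiso
  set π : R →+ ZMod p × ZMod p :=
    φ.toAddMonoidHom.comp (QuotientAddGroup.mk' (centerAddSubgroup R)) with hπ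
  have hker : ∀ r : R, π r = 0 ↔ r ∈ ringCenter R := by
    intro r
    rw [hπ]
    simp only [AddMonoidHom.comp_apply, AddEquiv.coe_toAddMonoidHom]
    rw [show (0 : ZMod p × ZMod p) = φ 0 by simp, φ.injective.eq_iff]
    rw [QuotientAddGroup.mk'_apply]
    exact QuotientAddGroup.eq_zero_iff r
  have hsurj : Function.Surjective π := by
    rw [hπ]
    exact φ.surjective.comp (QuotientAddGroup.mk'_surjective _)
  -- centralizer characterization
  have hcomm : ∀ x : R, x ∉ ringCenter R →
      ∀ y : R, (x * y = y * x ↔ ∃ k : ZMod p, π y = k • π x) := by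
    intro x hx y
    constructor
    · intro hxy
      by_contra hk
      apply hx
      intro r
      have hux : π x ≠ 0 := fun h => hx ((hker x).1 h)
      obtain ⟨a, b, hw⟩ := plane_span (π x) (π y) hux hk (π r)
      have ha : ((a.val : ZMod p)) = a := ZMod.natCast_rightInverse a
      have hb : ((b.val : ZMod p)) = b := ZMod.natCast_rightInverse b
      have hπr : π (r - (a.val • x + b.val • y)) = 0 := by
        rw [map_sub, map_add, map_nsmul, map_nsmul, ← Nat.cast_smul_eq_nsmul (ZMod p),
          ← Nat.cast_smul_eq_nsmul (ZMod p), ha, hb, ← hw, sub_self]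
      set z := r - (a.val • x + b.val • y) with hz
      have hzc : z ∈ ringCenter R := (hker z).1 hπr
      have hr : r = z + (a.val • x + b.val • y) := by rw [hz]; abel
      rw [hr]
      rw [add_mul, mul_add, add_mul, mul_add, mul_nsmul_right, mul_nsmul_right,
        nsmul_mul_left, nsmul_mul_left, hzc x, hxy]
    · rintro ⟨k, hk⟩
      have hkk : ((k.val : ZMod p)) = k := ZMod.natCast_rightInverse k
      have hπy : π (y - k.val • x) = 0 := by
        rw [map_sub, map_nsmul, ← Nat.cast_smul_eq_nsmul (ZMod p), hkk, ← hk, sub_self]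
      set z := y - k.val • x with hz
      have hzc : z ∈ ringCenter R := (hker z).1 hπy
      have hy : y = z + k.val • x := by rw [hz]; abel
      rw [hy, mul_add, add_mul, mul_nsmul_right, nsmul_mul_left, hzc x]
  -- fiber counting
  set zc := (ringCenter R).ncard with hzc
  have hfiber : ∀ v : ZMod p × ZMod p, Nat.card {r : R // π r = v} = zc := by
    intro v
    obtain ⟨r0, hr0⟩ := hsurj v
    rw [hzc, ← Nat.card_coe_set_eq]
    apply Nat.card_congr
    refine ⟨fun a => ⟨a.1 - r0, (hker _).1 (by rw [map_sub, a.2, hr0, sub_self])⟩,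
      fun z => ⟨z.1 + r0, by rw [map_add, (hker _).2 z.2, hr0, zero_add]⟩, ?_, ?_⟩
    · intro a; ext; simp
    · intro a; ext; simp
  have hcount : ∀ S : Set (ZMod p × ZMod p),
      Nat.card {r : R // π r ∈ S} = S.ncard * zc := by
    intro S
    have e1 : {r : R // π r ∈ S} ≃ Σ v : S, {r : R // π r = (v : ZMod p × ZMod p)} := by
      refine ⟨fun r => ⟨⟨π r.1, r.2⟩, ⟨r.1, rfl⟩⟩, fun x => ⟨x.2.1, by rw [x.2.2]; exact x.1.2⟩,
        ?_, ?_⟩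
      · intro r; rfl
      · rintro ⟨⟨v, hv⟩, r, hr⟩
        have hrv : π r = v := hr
        subst hrv
        rfl
    rw [Nat.card_congr e1, Nat.card_eq_fintype_card, Fintype.card_sigma]
    have hconst : ∀ v : S, Fintype.card {r : R // π r = (v : ZMod p × ZMod p)} = zc := by
      intro v; rw [← Nat.card_eq_fintype_card, hfiber]
    simp only [hconst, Finset.sum_const, Finset.card_univ, smul_eq_mul]
    congr 1
    rw [← Nat.card_eq_fintype_card, Nat.card_coe_set_eq]
  have hNZ : NeZero p := ⟨hp.pos.ne'⟩
  have hzpos : 0 < zc := by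
    rw [hzc]
    rw [Set.ncard_pos (Set.toFinite _)]
    exact ⟨0, fun r => by simp⟩
  -- centralizer class size
  have hclass : ∀ x : R, x ∉ ringCenter R →
      Nat.card {y : R // x * y = y * x ∧ y ∉ ringCenter R} = (p - 1) * zc := by
    intro x hx
    have hux : π x ≠ 0 := fun h => hx ((hker x).1 h)
    have e2 : {y : R // x * y = y * x ∧ y ∉ ringCenter R}
        ≃ {y : R // π y ∈ {v : ZMod p × ZMod p | (∃ k : ZMod p, v = k • π x) ∧ v ≠ 0}} := by
      apply Equiv.subtypeEquivRight
      intro y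
      rw [hcomm x hx y]
      constructor
      · rintro ⟨hk, hyc⟩
        exact ⟨hk, fun h0 => hyc ((hker y).1 h0)⟩
      · rintro ⟨hk, h0⟩
        exact ⟨hk, fun hyc => h0 ((hker y).2 hyc)⟩
    rw [Nat.card_congr e2, hcount]
    congr 1
    rw [← Nat.card_coe_set_eq]
    have e3 : {k : ZMod p // ¬ k = 0}
        ≃ {v : ZMod p × ZMod p | (∃ k : ZMod p, v = k • π x) ∧ v ≠ 0} := by
      apply Equiv.ofBijective (fun k => ⟨k.1 • π x, ⟨k.1, rfl⟩, smul_ne_zero k.2 hux⟩)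
      constructor
      · intro k k' h
        have h2 : k.1 • π x = k'.1 • π x := congrArg Subtype.val h
        have h3 : (k.1 - k'.1) • π x = 0 := by rw [sub_smul, h2, sub_self]
        rcases smul_eq_zero.mp h3 with h4 | h4
        · exact Subtype.ext (by linear_combination h4)
        · exact absurd h4 hux
      · rintro ⟨v, ⟨k, hk⟩, h0⟩
        have hkne : ¬ k = 0 := fun h => h0 (by rw [hk, h, zero_smul])
        exact ⟨⟨k, hkne⟩, Subtype.ext hk.symm⟩
    rw [← Nat.card_congr e3, Nat.card_eq_fintype_card, Fintype.card_subtype_compl,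
      Fintype.card_subtype_eq (0 : ZMod p), ZMod.card]
  -- total count
  have hV : Nat.card {x : R // x ∉ ringCenter R} = (p ^ 2 - 1) * zc := by
    have e4 : {x : R // x ∉ ringCenter R} ≃ {y : R // π y ∈ {v : ZMod p × ZMod p | ¬ v = 0}} := by
      apply Equiv.subtypeEquivRight
      intro y
      constructor
      · exact fun h h0 => h ((hker y).1 h0)
      · exact fun h h0 => h ((hker y).2 h0)
    rw [Nat.card_congr e4, hcount]
    congr 1
    rw [← Nat.card_coe_set_eq, Nat.card_eq_fintype_card]
    show Fintype.card {v : ZMod p × ZMod p // ¬ v = 0} = _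
    rw [Fintype.card_subtype_compl,
      Fintype.card_subtype_eq (0 : ZMod p × ZMod p), Fintype.card_prod, ZMod.card, sq]
  -- the setoid
  have htrans : ∀ x y z : {x : R // x ∉ ringCenter R},
      (x:R)*y = y*x → (y:R)*z = z*y → (x:R)*z = z*x := by
    intro x y z h1 h2
    obtain ⟨k, hk⟩ := (hcomm x x.2 y).1 h1
    obtain ⟨l, hl⟩ := (hcomm y y.2 z).1 h2
    exact (hcomm x x.2 z).2 ⟨l*k, by rw [hl, hk, smul_smul]⟩
  set s := commSetoid R htrans with hs
  have hfibers : ∀ c : Quotient s,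
      Nat.card {y : {x : R // x ∉ ringCenter R} // Quotient.mk s y = c} = (p - 1) * zc := by
    intro c
    induction c using Quotient.inductionOn with
    | h x₀ =>
      have e5 : {y : {x : R // x ∉ ringCenter R} // Quotient.mk s y = Quotient.mk s x₀}
          ≃ {y : R // (x₀:R) * y = y * x₀ ∧ y ∉ ringCenter R} := by
        refine ⟨fun y => ⟨y.1.1, ((Quotient.eq.mp y.2)).symm, y.1.2⟩,
          fun y => ⟨⟨y.1, y.2.2⟩, Quotient.sound y.2.1.symm⟩, ?_, ?_⟩
        · intro y; rfl
        · intro y; rfl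
      rw [Nat.card_congr e5, hclass x₀.1 x₀.2]
  -- number of classes
  have hQcard : Nat.card (Quotient s) = p + 1 := by
    have hsigma : Nat.card {x : R // x ∉ ringCenter R}
        = Nat.card (Quotient s) * ((p - 1) * zc) := by
      rw [← Nat.card_congr (Equiv.sigmaFiberEquiv (Quotient.mk s)),
        Nat.card_eq_fintype_card, Fintype.card_sigma]
      have hconst : ∀ c : Quotient s,
          Fintype.card {y : {x : R // x ∉ ringCenter R} // Quotient.mk s y = c}
            = (p - 1) * zc := by
        intro c; rw [← Nat.card_eq_fintype_card, hfibers]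
      simp only [hconst, Finset.sum_const, Finset.card_univ, smul_eq_mul]
      rw [← Nat.card_eq_fintype_card]
    rw [hV] at hsigma
    obtain ⟨q, rfl⟩ : ∃ q, p = q + 2 := ⟨p - 2, by have := hp.two_le; omega⟩
    have hfac : (q + 2) ^ 2 - 1 = (q + 3) * (q + 1) := by
      have h : (q + 2) ^ 2 = (q + 3) * (q + 1) + 1 := by ring
      rw [h, Nat.add_sub_cancel]
    rw [hfac, show q + 2 - 1 = q + 1 by omega] at hsigma
    have hpos : 0 < (q + 1) * zc := Nat.mul_pos (by omega) hzpos
    apply Nat.eq_of_mul_eq_mul_right hpos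
    rw [← hsigma, mul_assoc]
  -- the reindexing equivalence
  set m := (p - 1) * zc with hmdef
  have hmpos : 0 < m := Nat.mul_pos (by have := hp.two_le; omega) hzpos
  let eQ : Quotient s ≃ Fin (p + 1) := Finite.equivFinOfCardEq hQcard
  let efib : ∀ c : Quotient s,
      {y : {x : R // x ∉ ringCenter R} // Quotient.mk s y = c} ≃ Fin m :=
    fun c => Finite.equivFinOfCardEq (hfibers c)
  let e : {x : R // x ∉ ringCenter R} ≃ Fin m × Fin (p + 1) :=
    ((Equiv.sigmaFiberEquiv (Quotient.mk s)).symm.trans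
      ((Equiv.sigmaCongrRight efib).trans
        ((Equiv.sigmaEquivProd (Quotient s) (Fin m)).trans
          ((eQ.prodCongr (Equiv.refl (Fin m))).trans (Equiv.prodComm _ _)))))
  have he2 : ∀ x, (e x).2 = eQ (Quotient.mk s x) := fun x => rfl
  have hadj : ∀ x y, (commGraph R).Adj x y ↔ ((e x).2 = (e y).2 ∧ (e x).1 ≠ (e y).1) := by
    intro x y
    constructor
    · rintro ⟨hne, hcom⟩
      have hq : Quotient.mk s x = Quotient.mk s y := Quotient.sound hcom
      have h2 : (e x).2 = (e y).2 := by rw [he2, he2, hq]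
      refine ⟨h2, fun h1 => hne (e.injective (Prod.ext h1 h2))⟩
    · rintro ⟨h2, h1⟩
      have hq : Quotient.mk s x = Quotient.mk s y := eQ.injective (by rw [← he2, ← he2, h2])
      exact ⟨fun hxy => h1 (by rw [hxy]), Quotient.exact hq⟩
  -- identify the adjacency matrix with a block diagonal matrix
  show ((commGraph R).adjMatrix ℤ).charpoly = _
  rw [← Matrix.charpoly_reindex e ((commGraph R).adjMatrix ℤ)]
  have hBD : (Matrix.reindex e e) ((commGraph R).adjMatrix ℤ)
      = Matrix.blockDiagonal (fun _ : Fin (p + 1) =>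
          Matrix.of (fun i j : Fin m => if i = j then (0:ℤ) else 1)) := by
    ext ⟨i, c⟩ ⟨j, d⟩
    rw [Matrix.reindex_apply, Matrix.submatrix_apply, Matrix.blockDiagonal_apply]
    set x := e.symm (i, c) with hxd
    set y := e.symm (j, d) with hyd
    have hx : e x = (i, c) := e.apply_symm_apply _
    have hy : e y = (j, d) := e.apply_symm_apply _
    by_cases hcd : c = d
    · by_cases hij : i = j
      · have hxy : x = y := by
          apply e.injective; rw [hx, hy, hij, hcd]
        simp [SimpleGraph.adjMatrix_apply, hxy, hcd, hij]
      · have hA : (commGraph R).Adj x y := by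
          rw [hadj, hx, hy]
          exact ⟨by simp [hcd], by simpa using hij⟩
        simp [SimpleGraph.adjMatrix_apply, hA, hcd, hij]
    · have hA : ¬ (commGraph R).Adj x y := by
        rw [hadj, hx, hy]
        rintro ⟨h2, -⟩
        exact hcd (by simpa using h2)
      simp [SimpleGraph.adjMatrix_apply, hA, hcd]
  rw [hBD, charpoly_blockDiagonal]
  simp only [charpoly_clique m hmpos]
  rw [Finset.prod_const, Finset.card_univ, Fintype.card_fin, mul_pow, ← pow_mul]
  have hexp : (m - 1) * (p + 1) = (p ^ 2 - 1) * zc - p - 1 := by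
    obtain ⟨q, hq⟩ : ∃ q, p = q + 2 := ⟨p - 2, by have := hp.two_le; omega⟩
    subst hq
    have hm' : m = (q + 1) * zc := by rw [hmdef]; congr 1
    have e1 : (q + 2) ^ 2 - 1 = (q + 3) * (q + 1) := by
      have h : (q + 2) ^ 2 = (q + 3) * (q + 1) + 1 := by ring
      rw [h, Nat.add_sub_cancel]
    rw [hm', e1, Nat.sub_mul, one_mul]
    have e2 : (q + 3) * (q + 1) * zc = (q + 1) * zc * (q + 2 + 1) := by ring
    rw [e2]
    omega
  have hconst : ((m : ℤ) - 1) = ((p : ℤ) - 1) * (zc : ℤ) - 1 := by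
    rw [hmdef, Nat.cast_mul, Nat.cast_sub (by have := hp.two_le; omega : 1 ≤ p), Nat.cast_one]
  rw [hexp, hconst]




end Main

/-- if `R/Z(R) ≅ ℤ_p × ℤ_p` then the characteristic polynomial of
the adjacency matrix of the commuting graph is
`(X+1)^((p²-1)|Z(R)| - p - 1) * (X - ((p-1)|Z(R)| - 1))^(p+1)`. -/
theorem stmt9 (p : ℕ) (hp : p.Prime) (R : Type*) [NonUnitalRing R] [Fintype R]
    (hnc : ∃ a b : R, a * b ≠ b * a)
    (hiso : Nonempty ((R ⧸ centerAddSubgroup R) ≃+ (ZMod p × ZMod p))) :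
    commCharpoly R ℤ =
      (X + 1) ^ ((p ^ 2 - 1) * (ringCenter R).ncard - p - 1) *
        (X - C (((p : ℤ) - 1) * ((ringCenter R).ncard : ℤ) - 1)) ^ (p + 1) := by
  exact stmt9' p hp R hnc hiso
end

section
/- Let p be a prime and let R be a finite noncommutative ring such that the additive quotient group R/Z(R) is isomorphic to ℤ_p × ℤ_p. Then the commuting graph Γ_R is integral, i.e., every eigenvalue of the (real) adjacency matrix of Γ_R is an integer. -/
open Polynomial

/-- The centralizer of an element, as an additive subgroup. -/
def centralizerAddSubgroup {R : Type*} [NonUnitalRing R] (x : R) : AddSubgroup R where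
  carrier := ringCentralizer x
  add_mem' := by
    intro a b ha hb
    show x * (a + b) = (a + b) * x
    rw [mul_add, add_mul, ha, hb]
  zero_mem' := by
    show x * 0 = 0 * x
    simp
  neg_mem' := by
    intro a ha
    show x * (-a) = (-a) * x
    rw [mul_neg, neg_mul, ha]

section Aux

variable {p : ℕ} {R : Type*} [NonUnitalRing R] [Fintype R]

/-- Auxiliary: every element of the quotient is killed by `p`. -/
theorem aux_nsmul_quot (hp : p.Prime)
    (e : (R ⧸ centerAddSubgroup R) ≃+ (ZMod p × ZMod p)) (q : R ⧸ centerAddSubgroup R) :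
    p • q = 0 := by
  have : NeZero p := ⟨hp.ne_zero⟩
  apply e.injective
  rw [map_nsmul, map_zero]
  simp [nsmul_eq_mul, Prod.ext_iff]

/-- Auxiliary: the additive order of the class of a non-central element is `p`. -/
theorem aux_order (hp : p.Prime)
    (e : (R ⧸ centerAddSubgroup R) ≃+ (ZMod p × ZMod p)) {x : R} (hx : x ∉ ringCenter R) :
    addOrderOf (x : R ⧸ centerAddSubgroup R) = p := by
  have h1 : addOrderOf (x : R ⧸ centerAddSubgroup R) ∣ p :=
    addOrderOf_dvd_of_nsmul_eq_zero (aux_nsmul_quot hp e _)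
  rcases (Nat.Prime.eq_one_or_self_of_dvd hp _ h1) with h | h
  · exfalso
    rw [AddMonoid.addOrderOf_eq_one_iff, QuotientAddGroup.eq_zero_iff] at h
    exact hx h
  · exact h

/-- Key lemma: everything commuting with a non-central `x` is `k • x` plus a central element. -/
theorem aux_key (hp : p.Prime)
    (e : (R ⧸ centerAddSubgroup R) ≃+ (ZMod p × ZMod p)) {x : R} (hx : x ∉ ringCenter R)
    {y : R} (hxy : x * y = y * x) : ∃ k : ℤ, y - k • x ∈ centerAddSubgroup R := by
  classical
  set Z := centerAddSubgroup R with hZ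
  have mk_zsmul : ∀ (a : R) (n : ℤ), ((n • a : R) : R ⧸ Z) = n • (a : R ⧸ Z) :=
    fun a n => (QuotientAddGroup.mk' Z).map_zsmul n a
  set S : AddSubgroup (R ⧸ Z) := (centralizerAddSubgroup x).map (QuotientAddGroup.mk' Z) with hS
  have hxS : (x : R ⧸ Z) ∈ S := ⟨x, rfl, rfl⟩
  have hmult : AddSubgroup.zmultiples (x : R ⧸ Z) ≤ S := AddSubgroup.zmultiples_le_of_mem hxS
  have hSne : S ≠ ⊤ := by
    intro hStop
    apply hx
    intro r
    have hrS : ((r : R ⧸ Z)) ∈ S := hStop ▸ AddSubgroup.mem_top _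
    obtain ⟨c, hc, hcr⟩ := hrS
    have hcr' : (c : R ⧸ Z) = (r : R ⧸ Z) := hcr
    have hz : c - r ∈ Z := by
      rw [← QuotientAddGroup.eq_zero_iff, QuotientAddGroup.mk_sub, hcr', sub_self]
    have hz' : r - c ∈ Z := by simpa using Z.neg_mem hz
    have hc' : x * c = c * x := hc
    have h1 : x * (r - c) = (r - c) * x := hz' x
    calc r * x = (c + (r - c)) * x := by rw [add_sub_cancel]
      _ = c * x + (r - c) * x := by rw [add_mul]
      _ = x * c + x * (r - c) := by rw [← hc', ← h1]
      _ = x * (c + (r - c)) := by rw [mul_add]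
      _ = x * r := by rw [add_sub_cancel]
  have hcardQ : Nat.card (R ⧸ Z) = p ^ 2 := by
    have : NeZero p := ⟨hp.ne_zero⟩
    rw [Nat.card_congr e.toEquiv, Nat.card_prod, Nat.card_zmod, sq]
  have hdvd : Nat.card S ∣ p ^ 2 := hcardQ ▸ AddSubgroup.card_addSubgroup_dvd_card S
  have hple : p ≤ Nat.card S := by
    have h1 : Nat.card (AddSubgroup.zmultiples (x : R ⧸ Z)) = p := by
      rw [Nat.card_zmultiples, aux_order hp e hx]
    exact h1 ▸ AddSubgroup.card_le_of_le hmult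
  have hcardS : Nat.card S = p := by
    obtain ⟨i, hi2, hieq⟩ := (Nat.dvd_prime_pow hp).mp hdvd
    interval_cases i
    · exfalso; rw [hieq, pow_zero] at hple; exact absurd hple (not_le.mpr hp.one_lt)
    · simpa using hieq
    · exfalso
      apply hSne
      apply AddSubgroup.eq_top_of_card_eq
      rw [hieq, hcardQ]
  have hSeq : AddSubgroup.zmultiples (x : R ⧸ Z) = S := by
    apply AddSubgroup.eq_of_le_of_card_ge hmult
    rw [hcardS, Nat.card_zmultiples, aux_order hp e hx]
  have hyS : (y : R ⧸ Z) ∈ S := ⟨y, hxy, rfl⟩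
  rw [← hSeq, AddSubgroup.mem_zmultiples_iff] at hyS
  obtain ⟨k, hk⟩ := hyS
  refine ⟨k, ?_⟩
  rw [← QuotientAddGroup.eq_zero_iff, QuotientAddGroup.mk_sub]
  rw [mk_zsmul, hk, sub_self]

/-- Transitivity of commuting through a non-central pivot. -/
theorem aux_trans (hp : p.Prime)
    (e : (R ⧸ centerAddSubgroup R) ≃+ (ZMod p × ZMod p)) {y : R} (hy : y ∉ ringCenter R)
    {u w : R} (hu : y * u = u * y) (hw : y * w = w * y) : u * w = w * u := by
  obtain ⟨k, hk⟩ := aux_key hp e hy hu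
  have hu' : u = k • y + (u - k • y) := by rw [add_sub_cancel]
  have h1 : (k • y) * w = k • (y * w) := (AddMonoidHom.mulRight w).map_zsmul k y
  have h2 : w * (k • y) = k • (w * y) := (AddMonoidHom.mulLeft w).map_zsmul k y
  have h3 : (u - k • y) * w = w * (u - k • y) := (hk w).symm
  calc u * w = (k • y + (u - k • y)) * w := by rw [← hu']
    _ = (k • y) * w + (u - k • y) * w := by rw [add_mul]
    _ = k • (w * y) + w * (u - k • y) := by rw [h1, hw, h3]
    _ = w * (k • y) + w * (u - k • y) := by rw [h2]
    _ = w * (k • y + (u - k • y)) := by rw [mul_add]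
    _ = w * u := by rw [← hu']

end Aux

/-- if `R/Z(R) ≅ ℤ_p × ℤ_p` then the commuting graph is integral. -/
theorem stmt10 (p : ℕ) (hp : p.Prime) (R : Type*) [NonUnitalRing R] [Fintype R]
    (hnc : ∃ a b : R, a * b ≠ b * a)
    (hiso : Nonempty ((R ⧸ centerAddSubgroup R) ≃+ (ZMod p × ZMod p))) :
    ∀ μ : ℝ, (commCharpoly R ℝ).IsRoot μ → ∃ k : ℤ, μ = (k : ℝ) := by
  classical
  obtain ⟨e⟩ := hiso
  have hpne : NeZero p := ⟨hp.ne_zero⟩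
  set Z := centerAddSubgroup R with hZdef
  set V := {x : R // x ∉ ringCenter R} with hVdef
  set G := commGraph R with hGdef
  set m : ℕ := (p - 1) * Fintype.card Z with hmdef
  have mk_zsmul : ∀ (a : R) (n : ℤ), ((n • a : R) : R ⧸ Z) = n • (a : R ⧸ Z) :=
    fun a n => (QuotientAddGroup.mk' Z).map_zsmul n a
  have mk_nsmul : ∀ (a : R) (n : ℕ), ((n • a : R) : R ⧸ Z) = n • (a : R ⧸ Z) :=
    fun a n => (QuotientAddGroup.mk' Z).map_nsmul n a
  -- every closed commuting class has size m
  have key : ∀ v : V, (Finset.univ.filter fun w : V =>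
      (v : R) * (w : R) = (w : R) * (v : R)).card = m := by
    rintro ⟨x, hx⟩
    have horder : addOrderOf (x : R ⧸ Z) = p := aux_order hp e hx
    have hxineq : ∀ n : ℕ, 0 < n → n < p → n • x ∉ Z := by
      intro n hn hnp hmem
      have h0 : (n • x : R ⧸ Z) = 0 := (QuotientAddGroup.eq_zero_iff _).mpr hmem
      have : addOrderOf (x : R ⧸ Z) ∣ n := by
        apply addOrderOf_dvd_of_nsmul_eq_zero
        exact h0
      rw [horder] at this
      exact absurd (Nat.le_of_dvd hn this) (not_le.mpr hnp)
    have hpx : (p : ℤ) • x ∈ Z := by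
      rw [← QuotientAddGroup.eq_zero_iff, mk_zsmul, natCast_zsmul]
      exact aux_nsmul_quot hp e _
    have hmemV : ∀ (k : ZMod p), k ≠ 0 → ∀ z : R, z ∈ Z → (k.val • x + z) ∉ ringCenter R := by
      intro k hk z hz hmem
      have h1 : k.val • x + z - z ∈ Z := Z.sub_mem hmem hz
      rw [add_sub_cancel_right] at h1
      exact hxineq k.val (ZMod.val_pos.mpr hk) (ZMod.val_lt k) h1
    have hcomm : ∀ (k : ℕ) (z : R), z ∈ Z → x * (k • x + z) = (k • x + z) * x := by
      intro k z hz
      rw [mul_add, add_mul, hz x]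
      congr 1
      have e1 : x * (k • x) = k • (x * x) := (AddMonoidHom.mulLeft x).map_nsmul k x
      have e2 : (k • x) * x = k • (x * x) := (AddMonoidHom.mulRight x).map_nsmul k x
      rw [e1, e2]
    have hinjk : ∀ k k' : ZMod p, ∀ z z' : R, z ∈ Z → z' ∈ Z →
        k.val • x + z = k'.val • x + z' → k = k' := by
      intro k k' z z' hz hz' heq
      have h1 : ((k.val : ℤ) - (k'.val : ℤ)) • x = z' - z := by
        rw [sub_smul, natCast_zsmul, natCast_zsmul]
        calc k.val • x - k'.val • x = (k.val • x + z) - z - k'.val • x := by abel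
          _ = (k'.val • x + z') - z - k'.val • x := by rw [heq]
          _ = z' - z := by abel
      have h2 : ((k.val : ℤ) - (k'.val : ℤ)) • x ∈ Z := h1 ▸ Z.sub_mem hz' hz
      have h3 : ((k.val : ℤ) - (k'.val : ℤ)) • (x : R ⧸ Z) = 0 := by
        rw [← mk_zsmul]
        exact (QuotientAddGroup.eq_zero_iff _).mpr h2
      have h4 : (p : ℤ) ∣ (k.val : ℤ) - (k'.val : ℤ) := by
        have h4' := addOrderOf_dvd_iff_zsmul_eq_zero.mpr h3
        rwa [horder] at h4'
      have h5 : ((k.val : ℤ) : ZMod p) = ((k'.val : ℤ) : ZMod p) := by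
        rw [← sub_eq_zero, ← Int.cast_sub, ZMod.intCast_zmod_eq_zero_iff_dvd]
        exact h4
      rw [Int.cast_natCast, Int.cast_natCast, ZMod.natCast_rightInverse k,
        ZMod.natCast_rightInverse k'] at h5
      exact h5
    have hbij : ((Finset.univ : Finset ({k : ZMod p // k ≠ 0} × Z))).card =
        (Finset.univ.filter fun w : V =>
          (x : R) * (w : R) = (w : R) * (x : R)).card := by
      apply Finset.card_bij (fun a _ => (⟨a.1.1.val • x + (a.2 : R),
        hmemV a.1.1 a.1.2 (a.2 : R) a.2.2⟩ : V))
      · intro a _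
        simp only [Finset.mem_filter, Finset.mem_univ, true_and]
        exact hcomm a.1.1.val (a.2 : R) a.2.2
      · intro a _ b _ hab
        have h1 : a.1.1.val • x + (a.2 : R) = b.1.1.val • x + (b.2 : R) := congrArg Subtype.val hab
        have h2 : a.1 = b.1 := Subtype.ext (hinjk _ _ _ _ a.2.2 b.2.2 h1)
        have h3 : a.1.1.val • x = b.1.1.val • x := by rw [h2]
        have h4 : (a.2 : R) = (b.2 : R) := by
          have := h1; rw [h3] at this; exact add_left_cancel this
        exact Prod.ext h2 (Subtype.ext h4)
      · rintro ⟨w, hw⟩ hwmem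
        simp only [Finset.mem_filter, Finset.mem_univ, true_and] at hwmem
        obtain ⟨k, hk⟩ := aux_key hp e hx hwmem
        set k0 : ZMod p := (k : ZMod p) with hk0
        have hdvd : (p : ℤ) ∣ k - (k0.val : ℤ) := by
          rw [← ZMod.intCast_zmod_eq_zero_iff_dvd, Int.cast_sub, Int.cast_natCast,
            ZMod.natCast_rightInverse k0, hk0, sub_self]
        obtain ⟨t, ht⟩ := hdvd
        have hmem2 : (k - (k0.val : ℤ)) • x ∈ Z := by
          rw [ht, mul_comm, mul_smul]
          exact Z.zsmul_mem hpx t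
        have hzmem : w - k0.val • x ∈ Z := by
          have : w - k0.val • x = (w - k • x) + (k - (k0.val : ℤ)) • x := by
            rw [sub_smul, natCast_zsmul]
            abel
          rw [this]
          exact Z.add_mem hk hmem2
        have hk0ne : k0 ≠ 0 := by
          intro h0
          apply hw
          have hv0 : k0.val = 0 := by rw [h0]; exact ZMod.val_zero
          have : w - 0 • x ∈ Z := by rw [← hv0]; exact hzmem
          have h' : w ∈ Z := by simpa using this
          exact h'
        refine ⟨(⟨⟨k0, hk0ne⟩, ⟨w - k0.val • x, hzmem⟩⟩ :
          {k : ZMod p // k ≠ 0} × Z), Finset.mem_univ _, ?_⟩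
        apply Subtype.ext
        show k0.val • x + (w - k0.val • x) = w
        abel
    rw [← hbij, Finset.card_univ, Fintype.card_prod, hmdef]
    congr 1
    · rw [Fintype.card_subtype_compl, ZMod.card]
      simp [Fintype.card_subtype_eq]
  -- transitivity, packaged on vertices
  have htrans : ∀ y u w : V, (y : R) * (u : R) = (u : R) * (y : R) →
      (y : R) * (w : R) = (w : R) * (y : R) → (u : R) * (w : R) = (w : R) * (u : R) :=
    fun y u w hu hw => aux_trans hp e y.2 hu hw
  -- Adjacency matrix over ℝ
  set A : Matrix V V ℝ := G.adjMatrix ℝ with hAdef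
  have hAadj : ∀ u w : V, A u w = if G.Adj u w then (1:ℝ) else 0 := fun u w => rfl
  -- closed neighborhood card
  have hcard : ∀ v : V, (G.neighborFinset v).card + 1 = m := by
    intro v
    rw [← key v]
    have hins : (Finset.univ.filter fun w : V =>
        (v : R) * (w : R) = (w : R) * (v : R)) = insert v (G.neighborFinset v) := by
      ext w
      simp only [Finset.mem_filter, Finset.mem_univ, true_and, Finset.mem_insert,
        SimpleGraph.mem_neighborFinset]
      constructor
      · intro hcw
        by_cases hvw : w = v
        · exact Or.inl hvw
        · exact Or.inr (⟨fun h => hvw h.symm, hcw⟩ : _ ∧ _)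
      · rintro (rfl | hcw)
        · rfl
        · exact (hcw : _ ∧ _).2
    rw [hins, Finset.card_insert_of_notMem (by simp)]
  have hm1 : 1 ≤ m := by
    obtain ⟨a, b, hab⟩ := hnc
    have hbV : b ∉ ringCenter R := fun hb => hab (hb a)
    exact (hcard ⟨b, hbV⟩) ▸ Nat.le_add_left 1 _
  -- the quadratic matrix identity
  have hA2 : A * A = ((m : ℝ) - 2) • A + ((m : ℝ) - 1) • 1 := by
    ext u w
    by_cases huw : u = w
    · subst huw
      rw [SimpleGraph.adjMatrix_mul_self_apply_self]
      simp only [Matrix.add_apply, Matrix.smul_apply, Matrix.one_apply_eq, smul_eq_mul, mul_one,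
        SimpleGraph.adjMatrix_apply, if_neg (G.irrefl), mul_zero, zero_add]
      have h9 : ((G.neighborFinset u).card : ℝ) + 1 = m := by exact_mod_cast hcard u
      have hA0 : A u u = 0 := by rw [hAadj]; exact if_neg (G.irrefl)
      rw [SimpleGraph.degree, hA0, mul_zero, zero_add]
      linarith
    · rw [SimpleGraph.adjMatrix_mul_apply]
      have hsum : ∑ y ∈ G.neighborFinset u, A y w =
          ((G.neighborFinset u).filter fun y => G.Adj y w).card := by
        simp only [hAadj]
        exact Finset.sum_boole ..
      rw [hsum]
      by_cases hadj : G.Adj u w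
      · -- common neighbours : the class of u minus {u, w}
        have hset : ((G.neighborFinset u).filter fun y => G.Adj y w) =
            (Finset.univ.filter fun y : V =>
              (u : R) * (y : R) = (y : R) * (u : R)) \ {u, w} := by
          ext y
          simp only [Finset.mem_filter, SimpleGraph.mem_neighborFinset, Finset.mem_sdiff,
            Finset.mem_univ, true_and, Finset.mem_insert, Finset.mem_singleton]
          constructor
          · rintro ⟨h1, h2⟩
            obtain ⟨hne, hcomm⟩ : _ ∧ _ := h1
            obtain ⟨hne2, _⟩ : _ ∧ _ := h2
            exact ⟨hcomm, by push_neg; exact ⟨fun h => hne h.symm, fun h => hne2 h⟩⟩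
          · rintro ⟨hcomm, hy⟩
            push_neg at hy
            refine ⟨(⟨fun h => hy.1 h.symm, hcomm⟩ : _ ∧ _), (⟨hy.2, ?_⟩ : _ ∧ _)⟩
            exact htrans u y w hcomm (hadj : _ ∧ _).2
        have hsub : ({u, w} : Finset V) ⊆ (Finset.univ.filter fun y : V =>
            (u : R) * (y : R) = (y : R) * (u : R)) := by
          intro y hy
          simp only [Finset.mem_insert, Finset.mem_singleton] at hy
          simp only [Finset.mem_filter, Finset.mem_univ, true_and]
          rcases hy with rfl | rfl
          · rfl
          · exact (hadj : _ ∧ _).2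
        have hcard2 : ({u, w} : Finset V).card = 2 := Finset.card_pair huw
        have hm2 : 2 ≤ m := by
          rw [← key u, ← hcard2]
          exact Finset.card_le_card hsub
        rw [hset, Finset.card_sdiff_of_subset hsub, key u, hcard2]
        simp only [Matrix.add_apply, Matrix.smul_apply, Matrix.one_apply_ne huw, smul_eq_mul,
          mul_zero, add_zero, hAadj, if_pos hadj, mul_one]
        push_cast [Nat.cast_sub hm2]
        ring
      · have hempty : ((G.neighborFinset u).filter fun y => G.Adj y w) = ∅ := by
          apply Finset.filter_false_of_mem
          intro y hy
          rw [SimpleGraph.mem_neighborFinset] at hy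
          intro hyw
          exact hadj (⟨huw, htrans y u w (hy : _ ∧ _).2.symm (hyw : _ ∧ _).2⟩ : _ ∧ _)
        rw [hempty]
        simp only [Finset.card_empty, Nat.cast_zero, Matrix.add_apply, Matrix.smul_apply,
          Matrix.one_apply_ne huw, smul_eq_mul, mul_zero, add_zero, hAadj, if_neg hadj]
  -- the eigenvalue argument
  intro μ hμ
  have hμ' : Polynomial.eval μ A.charpoly = 0 := hμ
  have hdet : (μ • (1 : Matrix V V ℝ) - A).det = 0 := by
    rw [← hμ', Matrix.charpoly, eval_det, Matrix.matPolyEquiv_charmatrix]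
    simp only [eval_sub, eval_X, eval_C]
    congr 1
    ext i j
    simp [Matrix.scalar, Matrix.one_apply, Matrix.diagonal, Pi.algebraMap_apply,
      Matrix.smul_apply]
  obtain ⟨v, hv0, hv⟩ := Matrix.exists_mulVec_eq_zero_iff.mpr hdet
  have hAv : A.mulVec v = μ • v := by
    have := hv
    rw [Matrix.sub_mulVec, sub_eq_zero] at this
    rw [← this, Matrix.smul_mulVec, Matrix.one_mulVec]
  obtain ⟨i, hi⟩ := Function.ne_iff.mp hv0
  have hquad : μ ^ 2 = ((m : ℝ) - 2) * μ + ((m : ℝ) - 1) := by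
    have h1 : (A * A).mulVec v = μ ^ 2 • v := by
      rw [← Matrix.mulVec_mulVec, hAv, Matrix.mulVec_smul, hAv, smul_smul, sq]
    have h2 : (A * A).mulVec v = (((m : ℝ) - 2) * μ + ((m : ℝ) - 1)) • v := by
      rw [hA2, Matrix.add_mulVec, Matrix.smul_mulVec, Matrix.smul_mulVec,
        Matrix.one_mulVec, hAv, smul_smul, add_smul]
    have h3 : μ ^ 2 • v = (((m : ℝ) - 2) * μ + ((m : ℝ) - 1)) • v := by rw [← h1, h2]
    have h4 := congrFun h3 i
    simp only [Pi.smul_apply, smul_eq_mul] at h4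
    exact mul_right_cancel₀ hi h4
  have hfac : (μ + 1) * (μ - ((m : ℝ) - 1)) = 0 := by nlinarith [hquad]
  rcases mul_eq_zero.mp hfac with h | h
  · exact ⟨-1, by push_cast; linarith⟩
  · exact ⟨(m : ℤ) - 1, by push_cast; linarith⟩
end

section
/- Let p be a prime and let R be a noncommutative ring of order p². Then the center Z(R) has exactly one element, and the additive quotient group R/Z(R) is isomorphic to ℤ_p × ℤ_p. -/
open Polynomial

/-- a noncommutative ring of order `p²` has trivial center and
`R/Z(R) ≅ ℤ_p × ℤ_p` as additive groups. -/
theorem stmt11 (p : ℕ) (hp : p.Prime) (R : Type*) [NonUnitalRing R] [Fintype R]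
    (hnc : ∃ a b : R, a * b ≠ b * a)
    (hcard : Fintype.card R = p ^ 2) :
    (ringCenter R).ncard = 1 ∧
    Nonempty ((R ⧸ centerAddSubgroup R) ≃+ (ZMod p × ZMod p)) := by
  classical
  obtain ⟨a, b, hab⟩ := hnc
  have hncard : Nat.card R = p ^ 2 := by rw [Nat.card_eq_fintype_card, hcard]
  -- Step 1: the center is {0}.
  have hZ : ringCenter R = {0} := by
    ext z
    simp only [ringCenter, Set.mem_setOf_eq, Set.mem_singleton_iff]
    constructor
    · intro hz
      by_contra hz0
      set H := AddSubgroup.closure ({z, a} : Set R) with hH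
      have hcomm : ∀ x ∈ H, x * a = a * x := by
        intro x hx
        induction hx using AddSubgroup.closure_induction with
        | mem y hy =>
          rcases hy with rfl | rfl
          · exact (hz a).symm
          · rfl
        | zero => simp
        | add s t hs ht ihs iht => rw [add_mul, mul_add, ihs, iht]
        | neg s hs ih => rw [neg_mul, mul_neg, ih]
      have hzH : z ∈ H := AddSubgroup.subset_closure (by simp)
      have haH : a ∈ H := AddSubgroup.subset_closure (by simp)
      have hbH : b ∉ H := fun hb => hab ((hcomm b hb).symm)
      have hdvd : Nat.card H ∣ p ^ 2 := hncard ▸ AddSubgroup.card_addSubgroup_dvd_card H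
      obtain ⟨i, hi, hcardH⟩ := (Nat.dvd_prime_pow hp).mp hdvd
      interval_cases i
      · have : H = ⊥ := by
          rw [AddSubgroup.eq_bot_iff_card]; simpa using hcardH
        exact hz0 (by simpa [this] using hzH)
      · have hzle : AddSubgroup.zmultiples z ≤ H := by
          rwa [AddSubgroup.zmultiples_le]
        have hordz : addOrderOf z ∣ p := by
          have h1 : Nat.card (AddSubgroup.zmultiples z) ∣ Nat.card H :=
            AddSubgroup.card_dvd_of_le hzle
          rwa [Nat.card_zmultiples, hcardH, pow_one] at h1
        have hord : addOrderOf z = p := by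
          rcases (Nat.dvd_prime hp).mp hordz with h | h
          · exact absurd (AddMonoid.addOrderOf_eq_one_iff.mp h) hz0
          · exact h
        have hEq : AddSubgroup.zmultiples z = H := by
          apply AddSubgroup.eq_of_le_of_card_ge hzle
          rw [Nat.card_zmultiples, hord, hcardH, pow_one]
        obtain ⟨n, hn⟩ := AddSubgroup.mem_zmultiples_iff.mp (hEq ▸ haH)
        apply hab
        rw [← hn, smul_mul_assoc, ← hz b, mul_smul_comm]
      · have : H = ⊤ := AddSubgroup.eq_top_of_card_eq H (by rw [hcardH, hncard])
        exact hbH (this ▸ AddSubgroup.mem_top b)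
    · rintro rfl r; simp
  refine ⟨by rw [hZ]; exact Set.ncard_singleton 0, ?_⟩
  -- Step 2: every element has additive order dividing p.
  have hexp : ∀ x : R, p • x = 0 := by
    intro x
    have hdvd : addOrderOf x ∣ p ^ 2 := by
      have := addOrderOf_dvd_natCard x
      rwa [hncard] at this
    obtain ⟨i, hi, hord⟩ := (Nat.dvd_prime_pow hp).mp hdvd
    interval_cases i
    · simp only [pow_zero] at hord
      rw [AddMonoid.addOrderOf_eq_one_iff.mp hord]; simp
    · rw [pow_one] at hord
      rw [← hord, addOrderOf_nsmul_eq_zero]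
    · exfalso
      have htop : AddSubgroup.zmultiples x = ⊤ :=
        AddSubgroup.eq_top_of_card_eq _ (by rw [Nat.card_zmultiples, hord, hncard])
      obtain ⟨m, hm⟩ := AddSubgroup.mem_zmultiples_iff.mp (htop ▸ AddSubgroup.mem_top a)
      obtain ⟨n, hn⟩ := AddSubgroup.mem_zmultiples_iff.mp (htop ▸ AddSubgroup.mem_top b)
      apply hab
      rw [← hm, ← hn, smul_mul_assoc, smul_mul_assoc, mul_smul_comm, mul_smul_comm,
        smul_comm]
  -- Step 3: R is a ZMod p vector space of dimension 2.
  haveI := Fact.mk hp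
  haveI := NeZero.of_pos hp.pos
  letI instMod : Module (ZMod p) R := AddCommGroup.zmodModule hexp
  haveI hfin : Module.Finite (ZMod p) R := Module.Finite.of_finite
  haveI hfree : Module.Free (ZMod p) R := Module.Free.of_divisionRing _ _
  have hfr : Module.finrank (ZMod p) R = 2 := by
    have h1 : Fintype.card R = Fintype.card (ZMod p) ^ Module.finrank (ZMod p) R :=
      Module.card_eq_pow_finrank
    rw [ZMod.card, hcard] at h1
    exact Nat.pow_right_injective hp.two_le h1.symm
  have hfr2 : Module.finrank (ZMod p) (ZMod p × ZMod p) = 2 := by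
    simp [Module.finrank_prod]
  have e : R ≃ₗ[ZMod p] (ZMod p × ZMod p) :=
    @LinearEquiv.ofFinrankEq (ZMod p) R (ZMod p × ZMod p) _ _ instMod hfree _ _ _ _ hfin _
      (hfr.trans hfr2.symm)
  -- Step 4: assemble the quotient equivalence.
  have hbot : centerAddSubgroup R = ⊥ := by
    ext x
    have : x ∈ centerAddSubgroup R ↔ x ∈ ringCenter R := Iff.rfl
    rw [this, hZ]
    simp
  exact ⟨((QuotientAddGroup.quotientAddEquivOfEq hbot).trans
    QuotientAddGroup.quotientBot).trans e.toAddEquiv⟩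
end

section
/- Let p be a prime and let R be a noncommutative ring of order p². Then the characteristic polynomial of the adjacency matrix of the commuting graph Γ_R equals (X + 1)^{p² − p − 2} · (X − (p − 2))^{p + 1}; in particular Γ_R is integral. -/
open Polynomial

section Helpers
variable {p : ℕ} {R : Type*} [NonUnitalRing R]

def centAdd (x : R) : AddSubgroup R where
  carrier := ringCentralizer x
  add_mem' := by
    intro a b ha hb
    simp only [ringCentralizer, Set.mem_setOf_eq] at *
    rw [mul_add, add_mul, ha, hb]
  zero_mem' := by simp [ringCentralizer]
  neg_mem' := by
    intro a ha
    simp only [ringCentralizer, Set.mem_setOf_eq] at *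
    rw [mul_neg, neg_mul, ha]

lemma mem_centAdd {x y : R} : y ∈ centAdd x ↔ x * y = y * x := Iff.rfl

lemma zmultiples_le_centAdd (x : R) : AddSubgroup.zmultiples x ≤ centAdd x :=
  AddSubgroup.zmultiples_le_of_mem (mem_centAdd.mpr rfl)

variable [Fintype R]

lemma addOrderOf_eq_p (hp : p.Prime) (hcard : Fintype.card R = p ^ 2)
    {x : R} (hx : x ∉ ringCenter R) : addOrderOf x = p := by
  have hdvd : addOrderOf x ∣ p ^ 2 := hcard ▸ addOrderOf_dvd_card
  obtain ⟨i, hi, hxi⟩ := (Nat.dvd_prime_pow hp).mp hdvd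
  interval_cases i
  · rw [pow_zero] at hxi
    have hx0 : x = 0 := by rwa [AddMonoid.addOrderOf_eq_one_iff] at hxi
    exact absurd (fun r => by simp [hx0]) hx
  · rwa [pow_one] at hxi
  · exfalso
    have htop : (AddSubgroup.zmultiples x) = ⊤ := by
      apply AddSubgroup.eq_top_of_card_eq
      rw [Nat.card_zmultiples, hxi, Nat.card_eq_fintype_card, hcard]
    refine hx fun r => ?_
    have hr : r ∈ centAdd x := zmultiples_le_centAdd x (htop ▸ AddSubgroup.mem_top r)
    exact (mem_centAdd.mp hr).symm

lemma centAdd_eq_zmultiples (hp : p.Prime) (hcard : Fintype.card R = p ^ 2)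
    {x : R} (hx : x ∉ ringCenter R) :
    centAdd x = AddSubgroup.zmultiples x ∧ Nat.card (centAdd x) = p := by
  have hmul : Nat.card (AddSubgroup.zmultiples x) = p := by
    rw [Nat.card_zmultiples, addOrderOf_eq_p hp hcard hx]
  have hle := zmultiples_le_centAdd x
  have h1 : p ∣ Nat.card (centAdd x) := hmul ▸ AddSubgroup.card_dvd_of_le hle
  have h2 : Nat.card (centAdd x) ∣ p ^ 2 := by
    have h := AddSubgroup.card_dvd_of_le (le_top : centAdd x ≤ ⊤)
    rw [AddSubgroup.card_top] at h
    rwa [show Nat.card R = p ^ 2 by rw [Nat.card_eq_fintype_card, hcard]] at h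
  have hne : centAdd x ≠ ⊤ := by
    intro h
    refine hx fun r => ?_
    exact (mem_centAdd.mp (h ▸ AddSubgroup.mem_top r)).symm
  have hcardx : Nat.card (centAdd x) = p := by
    obtain ⟨j, hj, hcj⟩ := (Nat.dvd_prime_pow hp).mp h2
    interval_cases j
    · rw [pow_zero] at hcj
      rw [hcj] at h1
      exact absurd (Nat.dvd_one.mp h1) hp.one_lt.ne'
    · rwa [pow_one] at hcj
    · exfalso
      apply hne
      apply AddSubgroup.eq_top_of_card_eq
      rw [hcj, Nat.card_eq_fintype_card, hcard]
  refine ⟨(AddSubgroup.eq_of_le_of_card_ge hle ?_).symm, hcardx⟩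
  rw [hmul, hcardx]

lemma center_eq_zero (hp : p.Prime) (hcard : Fintype.card R = p ^ 2)
    (hnc : ∃ a b : R, a * b ≠ b * a) : ringCenter R = {0} := by
  obtain ⟨a, b, hab⟩ := hnc
  have hx : a ∉ ringCenter R := fun h => hab (h b).symm
  have hc := centAdd_eq_zmultiples hp hcard hx
  have hle : centerAddSubgroup R ≤ centAdd a := fun z hz => hz a
  have hd : Nat.card (centerAddSubgroup R) ∣ p := hc.2 ▸ AddSubgroup.card_dvd_of_le hle
  have hne : Nat.card (centerAddSubgroup R) ≠ p := by
    intro h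
    have heq := AddSubgroup.eq_of_le_of_card_ge hle (by rw [h, hc.2])
    have : a ∈ centerAddSubgroup R := heq ▸ (mem_centAdd.mpr rfl : a ∈ centAdd a)
    exact hx this
  have h1 : Nat.card (centerAddSubgroup R) = 1 := by
    rcases hp.eq_one_or_self_of_dvd _ hd with h | h
    · exact h
    · exact absurd h hne
  have hb' := AddSubgroup.eq_bot_of_card_eq _ h1
  ext z
  rw [Set.mem_singleton_iff,
    show z ∈ ringCenter R ↔ z ∈ centerAddSubgroup R from Iff.rfl, hb', AddSubgroup.mem_bot]

lemma comm_trans (hp : p.Prime) (hcard : Fintype.card R = p ^ 2) {x a b : R}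
    (hx : x ∉ ringCenter R) (ha : x * a = a * x) (hb : x * b = b * x) :
    a * b = b * a := by
  obtain ⟨heq, -⟩ := centAdd_eq_zmultiples hp hcard hx
  have ha' : a ∈ AddSubgroup.zmultiples x := heq ▸ (mem_centAdd.mpr ha)
  have hb' : b ∈ AddSubgroup.zmultiples x := heq ▸ (mem_centAdd.mpr hb)
  obtain ⟨m, rfl⟩ := ha'
  obtain ⟨n, rfl⟩ := hb'
  have key : ∀ k l : ℤ, (k • x) * (l • x) = (k * l) • (x * x) := fun k l =>
    calc (k • x) * (l • x) = k • (x * (l • x)) :=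
            map_zsmul (AddMonoidHom.mulRight (l • x)) k x
      _ = k • (l • (x * x)) := by
            rw [show x * (l • x) = l • (x * x) from map_zsmul (AddMonoidHom.mulLeft x) l x]
      _ = (k * l) • (x * x) := smul_smul k l (x * x)
  rw [key, key, mul_comm m n]

lemma card_comm_eq (hp : p.Prime) (hcard : Fintype.card R = p ^ 2)
    (hnc : ∃ a b : R, a * b ≠ b * a) {x : R} (hx : x ∉ ringCenter R) :
    Nat.card {y : R // x * y = y * x ∧ y ∉ ringCenter R} = p - 1 := by
  classical
  have hc0 := center_eq_zero hp hcard hnc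
  have hS := centAdd_eq_zmultiples hp hcard hx
  rw [Nat.card_congr (Equiv.subtypeEquivRight
    (q := fun y : R => y ∈ centAdd x ∧ ¬ y = 0) (fun y => by rw [hc0]; rfl))]
  rw [Nat.card_congr (Equiv.subtypeSubtypeEquivSubtypeInter
    (fun y : R => y ∈ centAdd x) (fun y => ¬ y = 0)).symm]
  rw [Nat.card_eq_fintype_card, Fintype.card_subtype_compl, ← Nat.card_eq_fintype_card, hS.2]
  congr 1
  rw [Fintype.card_eq_one_iff]
  refine ⟨⟨⟨0, AddSubgroup.zero_mem _⟩, rfl⟩, ?_⟩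
  rintro ⟨⟨y, hy⟩, (h0 : y = 0)⟩
  subst h0
  rfl

end Helpers

lemma eval_charpoly_det {n : Type*} [DecidableEq n] [Fintype n] {K : Type*} [CommRing K]
    (M : Matrix n n K) (t : K) :
    M.charpoly.eval t = (t • (1 : Matrix n n K) - M).det := by
  rw [Matrix.charpoly, ← Polynomial.coe_evalRingHom, RingHom.map_det]
  congr 1
  ext i j
  by_cases h : i = j <;>
    simp [h, Matrix.charmatrix_apply, Matrix.sub_apply, Matrix.smul_apply, Matrix.one_apply,
      Matrix.diagonal]

/-- for a noncommutative ring of order `p²`, the characteristic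
polynomial of the adjacency matrix of the commuting graph is
`(X+1)^(p²-p-2) * (X - (p-2))^(p+1)`; in particular the graph is integral. -/
theorem stmt12 (p : ℕ) (hp : p.Prime) (R : Type*) [NonUnitalRing R] [Fintype R]
    (hnc : ∃ a b : R, a * b ≠ b * a)
    (hcard : Fintype.card R = p ^ 2) :
    commCharpoly R ℤ =
      (X + 1) ^ (p ^ 2 - p - 2) * (X - C ((p : ℤ) - 2)) ^ (p + 1) ∧
    ∀ μ : ℝ, (commCharpoly R ℝ).IsRoot μ → ∃ k : ℤ, μ = (k : ℝ) := by
  classical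
  have hp2 := hp.two_le
  have hc0 : ringCenter R = {0} := center_eq_zero hp hcard hnc
  have hV : Fintype.card {x : R // x ∉ ringCenter R} = p ^ 2 - 1 := by
    rw [Fintype.card_subtype_compl, hcard]
    congr 1
    rw [Fintype.card_eq_one_iff]
    refine ⟨⟨0, fun r => by simp⟩, ?_⟩
    rintro ⟨y, hy⟩
    have : y = 0 := by rw [hc0] at hy; exact hy
    exact Subtype.ext this
  have hNpos : 0 < p ^ 2 - 1 := by
    have h4 : 2 ^ 2 ≤ p ^ 2 := Nat.pow_le_pow_left hp2 2
    omega
  haveI hne : Nonempty {x : R // x ∉ ringCenter R} := by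
    rw [← Fintype.card_pos_iff, hV]; exact hNpos
  set A := (commGraph R).adjMatrix ℂ with hA
  have hA1 : ∀ x y : {x : R // x ∉ ringCenter R},
      (A + 1) x y = if (x : R) * (y : R) = (y : R) * (x : R) then 1 else 0 := by
    intro x y
    by_cases h : x = y
    · subst h
      simp [hA, Matrix.add_apply, Matrix.one_apply_eq, SimpleGraph.adjMatrix_apply]
    · simp only [hA, Matrix.add_apply, Matrix.one_apply_ne h, SimpleGraph.adjMatrix_apply, add_zero]
      simp [commGraph, h]
  have hcomm_card : ∀ x : {x : R // x ∉ ringCenter R},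
      (Finset.univ.filter
        (fun y : {x : R // x ∉ ringCenter R} => (x : R) * (y : R) = (y : R) * (x : R))).card
        = p - 1 := by
    intro x
    rw [← Fintype.card_subtype, ← Nat.card_eq_fintype_card,
      Nat.card_congr (Equiv.subtypeSubtypeEquivSubtypeInter
        (fun y : R => y ∉ ringCenter R) (fun y => (x : R) * y = y * (x : R))),
      Nat.card_congr (Equiv.subtypeEquivRight (fun y => and_comm))]
    exact card_comm_eq hp hcard hnc x.2
  have hM : (A + 1) * (A + 1) = ((p : ℂ) - 1) • (A + 1) := by
    ext x z
    rw [Matrix.mul_apply]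
    simp only [Matrix.smul_apply]
    rw [hA1 x z]
    by_cases hxz : (x : R) * (z : R) = (z : R) * (x : R)
    · rw [if_pos hxz]
      have hterm : ∀ y : {x : R // x ∉ ringCenter R},
          (A + 1) x y * (A + 1) y z
            = if (x : R) * (y : R) = (y : R) * (x : R) then (1 : ℂ) else 0 := by
        intro y
        rw [hA1 x y, hA1 y z]
        by_cases h1 : (x : R) * (y : R) = (y : R) * (x : R)
        · rw [if_pos h1, if_pos (comm_trans hp hcard x.2 h1 hxz), one_mul]
        · rw [if_neg h1, zero_mul]
      rw [Finset.sum_congr rfl (fun y _ => hterm y), Finset.sum_boole, hcomm_card x]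
      rw [smul_eq_mul, mul_one]
      push_cast [Nat.cast_sub (by omega : 1 ≤ p)]
      ring
    · rw [if_neg hxz, smul_eq_mul, mul_zero]
      refine Finset.sum_eq_zero fun y _ => ?_
      rw [hA1 x y, hA1 y z]
      by_cases h1 : (x : R) * (y : R) = (y : R) * (x : R)
      · by_cases h2 : (y : R) * (z : R) = (z : R) * (y : R)
        · exact absurd (comm_trans hp hcard y.2 h1.symm h2) hxz
        · rw [if_neg h2, mul_zero]
      · rw [if_neg h1, zero_mul]
  -- annihilating polynomial
  have e1 : (A + 1) * A = ((p : ℂ) - 2) • (A + 1) := by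
    have h := hM
    rw [mul_add, mul_one] at h
    have h2 : (A + 1) * A = ((p : ℂ) - 1) • (A + 1) - (A + 1) := eq_sub_of_add_eq h
    rw [h2]
    module
  have hq : (A + 1) * (A - ((p : ℂ) - 2) • 1) = 0 := by
    rw [mul_sub, mul_smul_comm, mul_one, e1, sub_self]
  -- roots of the characteristic polynomial
  set χ := A.charpoly with hχdef
  have hmonic : χ.Monic := A.charpoly_monic
  have hsplits : χ.Splits := IsAlgClosed.splits χ
  have hdeg : χ.natDegree = p ^ 2 - 1 := by
    rw [hχdef, Matrix.charpoly_natDegree_eq_dim, hV]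
  have hroots_card : Multiset.card χ.roots = p ^ 2 - 1 := by
    rw [← hdeg, hsplits.natDegree_eq_card_roots]
  have hroot_mem : ∀ r ∈ χ.roots, r = -1 ∨ r = (p : ℂ) - 2 := by
    intro r hr
    have hχ0 : χ ≠ 0 := hmonic.ne_zero
    have hr0 : χ.eval r = 0 := (Polynomial.mem_roots hχ0).mp hr
    have hdet : (r • (1 : Matrix _ _ ℂ) - A).det = 0 := by
      rw [← eval_charpoly_det]; exact hr0
    obtain ⟨v, hv0, hv⟩ := (Matrix.exists_mulVec_eq_zero_iff).mpr hdet
    have hAv : A.mulVec v = r • v := by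
      rw [Matrix.sub_mulVec, Matrix.smul_mulVec, Matrix.one_mulVec, sub_eq_zero] at hv
      exact hv.symm
    have h0 : ((r + 1) * (r - ((p : ℂ) - 2))) • v = 0 := by
      have := congrArg (fun M : Matrix _ _ ℂ => M.mulVec v) hq
      simp only [Matrix.zero_mulVec] at this
      rw [← Matrix.mulVec_mulVec, Matrix.sub_mulVec, Matrix.smul_mulVec,
        Matrix.one_mulVec, hAv, ← sub_smul, Matrix.mulVec_smul, Matrix.add_mulVec,
        Matrix.one_mulVec, hAv] at this
      rw [← this]
      module
    have hfac : (r + 1) * (r - ((p : ℂ) - 2)) = 0 := by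
      by_contra h
      exact hv0 ((smul_eq_zero.mp h0).resolve_left h)
    rcases mul_eq_zero.mp hfac with h | h
    · exact Or.inl (eq_neg_of_add_eq_zero_left h)
    · exact Or.inr (sub_eq_zero.mp h)
  -- decompose the multiset of roots
  set a := Multiset.card (χ.roots.filter (fun r => r = -1)) with hadef
  set b := Multiset.card (χ.roots.filter (fun r => ¬ r = -1)) with hbdef
  have hs : χ.roots = Multiset.replicate a (-1) + Multiset.replicate b ((p : ℂ) - 2) := by
    conv_lhs => rw [← Multiset.filter_add_not (fun r => r = -1) χ.roots]
    congr 1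
    · exact Multiset.eq_replicate_card.mpr fun r hr => (Multiset.mem_filter.mp hr).2
    · refine Multiset.eq_replicate_card.mpr fun r hr => ?_
      obtain ⟨hr1, hr2⟩ := Multiset.mem_filter.mp hr
      exact (hroot_mem r hr1).resolve_left hr2
  have hab : a + b = p ^ 2 - 1 := by
    rw [← hroots_card, hs, Multiset.card_add, Multiset.card_replicate, Multiset.card_replicate]
  -- trace is zero
  have htr : Matrix.trace A = 0 := by simp [hA]
  have hsum : χ.roots.sum = 0 := by
    have h := hsplits.nextCoeff_eq_neg_sum_roots_of_monic hmonic
    have hnext : χ.nextCoeff = 0 := by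
      rw [Polynomial.nextCoeff, if_neg (by rw [hdeg]; omega), hdeg]
      have h2 := Matrix.trace_eq_neg_charpoly_coeff A
      rw [htr, hV] at h2
      have := h2.symm
      rw [neg_eq_zero] at this
      exact this
    rw [hnext] at h
    exact (neg_eq_zero.mp h.symm)
  have hsum2 : (a : ℂ) * (-1) + (b : ℂ) * ((p : ℂ) - 2) = 0 := by
    rw [hs] at hsum
    rw [Multiset.sum_add, Multiset.sum_replicate, Multiset.sum_replicate] at hsum
    rw [nsmul_eq_mul, nsmul_eq_mul] at hsum
    exact hsum
  have ha' : a = b * (p - 2) := by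
    have hcast : (a : ℂ) = ((b * (p - 2) : ℕ) : ℂ) := by
      push_cast [Nat.cast_sub hp2]
      linear_combination -hsum2
    exact_mod_cast hcast
  -- solve for a and b
  obtain ⟨m, rfl⟩ : ∃ m, p = m + 2 := ⟨p - 2, by omega⟩
  have hb' : b = m + 3 := by
    have hsq : (m + 2) ^ 2 = m * m + 4 * m + 4 := by ring
    rw [ha', show m + 2 - 2 = m from rfl] at hab
    rw [hsq] at hab
    have hab2 : b * m + b = m * m + 4 * m + 3 := by omega
    have hbm : b * (m + 1) = (m + 3) * (m + 1) := by
      rw [show b * (m + 1) = b * m + b by ring, hab2]; ring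
    exact Nat.eq_of_mul_eq_mul_right (Nat.succ_pos m) hbm
  have ha2 : a = (m + 2) ^ 2 - (m + 2) - 2 := by
    have hsq : (m + 2) ^ 2 = m * m + 4 * m + 4 := by ring
    rw [ha', hb', show m + 2 - 2 = m from rfl, hsq]
    have : (m + 3) * m = m * m + 3 * m := by ring
    omega
  have hb2 : b = (m + 2) + 1 := by omega
  -- the characteristic polynomial over ℂ
  have hχeq : χ = (X + 1) ^ a * (X - C (((m + 2 : ℕ) : ℂ) - 2)) ^ b := by
    conv_lhs => rw [hsplits.eq_prod_roots_of_monic hmonic]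
    rw [hs, Multiset.map_add, Multiset.prod_add, Multiset.map_replicate,
      Multiset.map_replicate, Multiset.prod_replicate, Multiset.prod_replicate]
    congr 1
    rw [map_neg, map_one, sub_neg_eq_add]
  -- transfer to ℤ
  have hmapZ : ((commGraph R).adjMatrix ℤ).map (Int.castRingHom ℂ) = A := by
    ext x y
    by_cases h : (commGraph R).Adj x y <;>
      simp [hA, Matrix.map_apply, SimpleGraph.adjMatrix_apply, h]
  have hZχ : (commCharpoly R ℤ).map (Int.castRingHom ℂ) = χ := by
    rw [show commCharpoly R ℤ = ((commGraph R).adjMatrix ℤ).charpoly from rfl,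
      ← Matrix.charpoly_map, hmapZ, hχdef]
  have hZ : commCharpoly R ℤ = (X + 1) ^ a * (X - C (((m + 2 : ℕ) : ℤ) - 2)) ^ b := by
    apply Polynomial.map_injective (Int.castRingHom ℂ) Int.cast_injective
    rw [hZχ, hχeq]
    simp only [Polynomial.map_mul, Polynomial.map_pow, Polynomial.map_add,
      Polynomial.map_sub, Polynomial.map_one, Polynomial.map_X, Polynomial.map_C]
    norm_num
  constructor
  · rw [hZ, ha2, hb2]
  · intro μ hμ
    have hmapR : commCharpoly R ℝ = (commCharpoly R ℤ).map (Int.castRingHom ℝ) := by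
      rw [show commCharpoly R ℝ = ((commGraph R).adjMatrix ℝ).charpoly from rfl,
        show commCharpoly R ℤ = ((commGraph R).adjMatrix ℤ).charpoly from rfl,
        ← Matrix.charpoly_map]
      congr 1
      ext x y
      by_cases h : (commGraph R).Adj x y <;>
        simp [Matrix.map_apply, SimpleGraph.adjMatrix_apply, h]
    rw [hmapR, hZ] at hμ
    simp only [Polynomial.IsRoot, Polynomial.map_mul, Polynomial.map_pow, Polynomial.map_add,
      Polynomial.map_sub, Polynomial.map_one, Polynomial.map_X, Polynomial.map_C,
      Polynomial.eval_mul, Polynomial.eval_pow, Polynomial.eval_add, Polynomial.eval_sub,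
      Polynomial.eval_X, Polynomial.eval_one, Polynomial.eval_C] at hμ
    rcases mul_eq_zero.mp hμ with h | h
    · refine ⟨-1, ?_⟩
      have h1 : μ + 1 = 0 := (pow_eq_zero_iff'.mp h).1
      push_cast
      linarith
    · refine ⟨((m + 2 : ℕ) : ℤ) - 2, ?_⟩
      have h1 : μ - ((Int.castRingHom ℝ) (((m + 2 : ℕ) : ℤ) - 2)) = 0 := (pow_eq_zero_iff'.mp h).1
      simp only [eq_intCast] at h1 ⊢
      push_cast at h1 ⊢
      linarith
end
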